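/- arXiv:1906.00185 — 14 statements merged into one kernel-verified Lean document; each statement's English description precedes it below -/
import Mathlib

section
/- Let X be a topological space and let 𝓕 be a family of closed subsets of X such that every member of 𝓕 is Lindelöf as a subspace of X. If X is 𝓕-regular, then X is 𝓕-normal. -/
universe u

open Cardinal Set Topology

/-- `X` is `𝓕`-regular: any `F ∈ 𝓕` and point `x ∉ F` can be separated by disjoint open sets. -/
def FRegular (X : Type u) [TopologicalSpace X] (F : Set (Set X)) : Prop :=
  ∀ A ∈ F, ∀ x : X, x ∉ A → ∃ U V : Set X,
    IsOpen U ∧ IsOpen V ∧ A ⊆ U ∧ x ∈ V ∧ Disjoint U V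

/-- `X` is strongly `𝓕`-regular: any `F ∈ 𝓕` and point `x ∉ F` can be separated by open
sets with disjoint closures. -/
def StronglyFRegular (X : Type u) [TopologicalSpace X] (F : Set (Set X)) : Prop :=
  ∀ A ∈ F, ∀ x : X, x ∉ A → ∃ U V : Set X,
    IsOpen U ∧ IsOpen V ∧ A ⊆ U ∧ x ∈ V ∧ closure U ∩ closure V = ∅

/-- `X` is `𝓕`-normal: any two disjoint members of `𝓕` can be separated by disjoint open sets. -/
def FNormal (X : Type u) [TopologicalSpace X] (F : Set (Set X)) : Prop :=
  ∀ A ∈ F, ∀ B ∈ F, Disjoint A B → ∃ U V : Set X,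
    IsOpen U ∧ IsOpen V ∧ A ⊆ U ∧ B ⊆ V ∧ Disjoint U V

/-- `X` is strongly `𝓕`-normal: any two disjoint members of `𝓕` can be separated by
open sets with disjoint closures. -/
def StronglyFNormal (X : Type u) [TopologicalSpace X] (F : Set (Set X)) : Prop :=
  ∀ A ∈ F, ∀ B ∈ F, Disjoint A B → ∃ U V : Set X,
    IsOpen U ∧ IsOpen V ∧ A ⊆ U ∧ B ⊆ V ∧ closure U ∩ closure V = ∅

/-- `X` is totally `𝓕`-normal: any member of `𝓕` and any closed set disjoint from it can be
separated by disjoint open sets. -/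
def TotallyFNormal (X : Type u) [TopologicalSpace X] (F : Set (Set X)) : Prop :=
  ∀ A ∈ F, ∀ B : Set X, IsClosed B → Disjoint A B → ∃ U V : Set X,
    IsOpen U ∧ IsOpen V ∧ A ⊆ U ∧ B ⊆ V ∧ Disjoint U V

/-!
Regularity with respect to `𝓕` gives, around each point of `A`, an open set whose closure misses
`B`; by the Lindelöf property countably many of them cover `A`, and symmetrically for `B`. Two such
countable covers are turned into disjoint open neighbourhoods by subtracting from the `n`-th set of
each cover the closures of the first `n` sets of the other.
-/

lemma FRegular.exists_isOpen_mem_disjoint_closure {X : Type u} [TopologicalSpace X]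
    {F : Set (Set X)} (hreg : FRegular X F) {A : Set X} (hA : A ∈ F) {x : X} (hx : x ∉ A) :
    ∃ V : Set X, IsOpen V ∧ x ∈ V ∧ Disjoint (closure V) A := by
  obtain ⟨U, V, hUo, hVo, hAU, hxV, hUV⟩ := hreg A hA x hx
  exact ⟨V, hVo, hxV, (hUV.symm.closure_left hUo).mono_right hAU⟩

lemma IsLindelof.hasSeparatingCover {X : Type u} [TopologicalSpace X] {s t : Set X}
    (hs : IsLindelof s) (h : ∀ x ∈ s, ∃ V : Set X, IsOpen V ∧ x ∈ V ∧ Disjoint (closure V) t) :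
    HasSeparatingCover s t := by
  let ι := {V : Set X // IsOpen V ∧ Disjoint (closure V) t}
  have : Nonempty ι := ⟨⟨∅, isOpen_empty, by simp⟩⟩
  have hcover : s ⊆ ⋃ V : ι, V.1 := fun x hx ↦ by
    obtain ⟨V, hVo, hxV, hVt⟩ := h x hx
    exact mem_iUnion.2 ⟨⟨V, hVo, hVt⟩, hxV⟩
  obtain ⟨f, hf⟩ := hs.indexed_countable_subcover (fun V : ι ↦ V.1) (fun V ↦ V.2.1) hcover
  exact ⟨fun n ↦ (f n).1, hf, fun n ↦ (f n).2⟩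

theorem fnormal_of_fregular_general {X : Type u} [TopologicalSpace X] (F : Set (Set X))
    (hLind : ∀ A ∈ F, IsLindelof A)
    (hreg : FRegular X F) : FNormal X F := by
  have hcover {S T : Set X} (hS : S ∈ F) (hT : T ∈ F) (hST : Disjoint S T) :
      HasSeparatingCover S T :=
    (hLind S hS).hasSeparatingCover fun x hx ↦
      hreg.exists_isOpen_mem_disjoint_closure hT (hST.notMem_of_mem_left hx)
  intro A hA B hB hAB
  exact hasSeparatingCovers_iff_separatedNhds.mp ⟨hcover hA hB hAB, hcover hB hA hAB.symm⟩

/-- If `𝓕` is a family of closed subsets of `X` whose members are Lindelöf subspaces of `X`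
and `X` is `𝓕`-regular, then `X` is `𝓕`-normal. -/
theorem fnormal_of_fregular {X : Type u} [TopologicalSpace X] (F : Set (Set X))
    (hclosed : ∀ A ∈ F, IsClosed A) (hLind : ∀ A ∈ F, IsLindelof A)
    (hreg : FRegular X F) : FNormal X F :=
  fnormal_of_fregular_general F hLind hreg
end

section
/- If a subset Y of a topological space X is countably paracompact in X, then every subset of Y that is closed in the subspace Y is also countably paracompact in X. -/
universe u

open Cardinal Set Topology

/-- A subset `Y` of a topological space `X` is countably paracompact in `X` if every countable
cover of `Y` by open subsets of `X` admits a locally finite (in `X`) refinement by open subsets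
of `X` covering `Y`. -/
def CountablyParacompactIn (X : Type u) [TopologicalSpace X] (Y : Set X) : Prop :=
  ∀ U : Set (Set X), U.Countable → (∀ u ∈ U, IsOpen u) → Y ⊆ ⋃₀ U →
    ∃ V : Set (Set X), (∀ v ∈ V, IsOpen v) ∧
      LocallyFinite (fun v : V => (v : Set X)) ∧
      Y ⊆ ⋃₀ V ∧ ∀ v ∈ V, ∃ u ∈ U, v ⊆ u

/-- Cover `Y` by `U` together with the open set `tᶜ`; a member of the resulting refinement lying
in `tᶜ` misses `Y ∩ t`, so the members lying in some member of `U` still cover `Y ∩ t`. -/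
theorem CountablyParacompactIn.inter_isClosed {X : Type u} [TopologicalSpace X] {Y t : Set X}
    (hY : CountablyParacompactIn X Y) (ht : IsClosed t) : CountablyParacompactIn X (Y ∩ t) := by
  intro U hUc hUo hUcov
  have hYcov : Y ⊆ ⋃₀ insert tᶜ U := by
    intro y hy
    rw [sUnion_insert]
    by_cases hyt : y ∈ t
    exacts [Or.inr (hUcov ⟨hy, hyt⟩), Or.inl hyt]
  obtain ⟨V, hVo, hVlf, hVcov, hVref⟩ :=
    hY (insert tᶜ U) (hUc.insert _) (forall_mem_insert.mpr ⟨ht.isOpen_compl, hUo⟩) hYcov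
  refine ⟨{v ∈ V | ∃ u ∈ U, v ⊆ u}, fun v hv => hVo v hv.1,
    hVlf.comp_injective (inclusion_injective (sep_subset V _)), ?_, fun v hv => hv.2⟩
  rintro z ⟨hzY, hzt⟩
  obtain ⟨v, hv, hzv⟩ := hVcov hzY
  obtain ⟨u, rfl | hu, hvu⟩ := hVref v hv
  · exact absurd hzt (hvu hzv)
  · exact ⟨v, ⟨hv, u, hu, hvu⟩, hzv⟩

/-- If `Y ⊆ X` is countably paracompact in `X`, then every subset of `Y` that is closed in the
subspace `Y` is countably paracompact in `X`. -/
theorem countablyParacompactIn_of_isClosed_subset {X : Type u} [TopologicalSpace X] {Y : Set X}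
    (hY : CountablyParacompactIn X Y) (Z : Set X) (hZY : Z ⊆ Y)
    (hZ : IsClosed ((Subtype.val ⁻¹' Z : Set Y))) : CountablyParacompactIn X Z := by
  obtain ⟨t, ht, htZ⟩ := isClosed_induced_iff.mp hZ
  have hYt : Y ∩ t = Z := by
    rw [Subtype.preimage_coe_eq_preimage_coe_iff.mp htZ, inter_eq_right.mpr hZY]
  exact hYt ▸ hY.inter_isClosed ht
end

section
/- Let X be a topological space and let 𝓕 be a family of closed subsets of X such that every member of 𝓕 is Lindelöf as a subspace of X and is countably paracompact in X. If X is strongly 𝓕-regular, then X is strongly 𝓕-normal. -/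
universe u

open Cardinal Set Topology

/-- If `𝓕` is a family of closed subsets of `X` whose members are Lindelöf subspaces of `X`
and countably paracompact in `X`, and `X` is strongly `𝓕`-regular, then `X` is strongly
`𝓕`-normal. -/
theorem stronglyFNormal_of_stronglyFRegular {X : Type u} [TopologicalSpace X] (F : Set (Set X))
    (hclosed : ∀ A ∈ F, IsClosed A) (hLind : ∀ A ∈ F, IsLindelof A)
    (hcp : ∀ A ∈ F, CountablyParacompactIn X A)
    (hreg : StronglyFRegular X F) : StronglyFNormal X F := by
  intro A hA B hB hAB
  rcases A.eq_empty_or_nonempty with rfl | hAne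
  · exact ⟨∅, univ, isOpen_empty, isOpen_univ, Subset.rfl, subset_univ _, by simp⟩
  rcases B.eq_empty_or_nonempty with rfl | hBne
  · exact ⟨univ, ∅, isOpen_univ, isOpen_empty, subset_univ _, Subset.rfl, by simp⟩
  -- separate each point of A from B, and each point of B from A
  have h1 : ∀ x : A, ∃ U V : Set X, IsOpen U ∧ IsOpen V ∧ B ⊆ U ∧ (x : X) ∈ V ∧
      closure U ∩ closure V = ∅ :=
    fun x => hreg B hB x (disjoint_left.mp hAB x.2)
  have h2 : ∀ y : B, ∃ U V : Set X, IsOpen U ∧ IsOpen V ∧ A ⊆ U ∧ (y : X) ∈ V ∧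
      closure U ∩ closure V = ∅ :=
    fun y => hreg A hA y (disjoint_right.mp hAB y.2)
  choose Ux Vx hUxo hVxo hBUx hxVx hdisx using h1
  choose Oy Wy hOyo hWyo hAOy hyWy hdisy using h2
  -- countable subcovers
  obtain ⟨r, hrc, hrcov⟩ := (hLind A hA).elim_countable_subcover Vx hVxo
    (fun a ha => mem_iUnion.mpr ⟨⟨a, ha⟩, hxVx ⟨a, ha⟩⟩)
  obtain ⟨s, hsc, hscov⟩ := (hLind B hB).elim_countable_subcover Wy hWyo
    (fun b hb => mem_iUnion.mpr ⟨⟨b, hb⟩, hyWy ⟨b, hb⟩⟩)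
  have hrne : r.Nonempty := by
    obtain ⟨a, ha⟩ := hAne
    obtain ⟨i, hi, -⟩ := mem_iUnion₂.mp (hrcov ha)
    exact ⟨i, hi⟩
  have hsne : s.Nonempty := by
    obtain ⟨b, hb⟩ := hBne
    obtain ⟨i, hi, -⟩ := mem_iUnion₂.mp (hscov hb)
    exact ⟨i, hi⟩
  obtain ⟨f, hf⟩ := hrc.exists_eq_range hrne
  obtain ⟨g, hg⟩ := hsc.exists_eq_range hsne
  -- the shrunken countable covers
  set V' : ℕ → Set X := fun n => Vx (f n) ∩ ⋂ m ∈ Finset.range (n + 1), Oy (g m) with hV'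
  set W' : ℕ → Set X := fun n => Wy (g n) ∩ ⋂ m ∈ Finset.range (n + 1), Ux (f m) with hW'
  have hV'o : ∀ n, IsOpen (V' n) :=
    fun n => (hVxo _).inter (isOpen_biInter_finset fun m _ => hOyo _)
  have hW'o : ∀ n, IsOpen (W' n) :=
    fun n => (hWyo _).inter (isOpen_biInter_finset fun m _ => hUxo _)
  have hAcov : A ⊆ ⋃₀ range V' := by
    intro a ha
    obtain ⟨i, hi, hai⟩ := mem_iUnion₂.mp (hrcov ha)
    rw [hf] at hi
    obtain ⟨n, rfl⟩ := hi
    exact ⟨V' n, mem_range_self n, hai, by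
      simp only [mem_iInter]; exact fun m _ => hAOy (g m) ha⟩
  have hBcov : B ⊆ ⋃₀ range W' := by
    intro b hb
    obtain ⟨i, hi, hbi⟩ := mem_iUnion₂.mp (hscov hb)
    rw [hg] at hi
    obtain ⟨n, rfl⟩ := hi
    exact ⟨W' n, mem_range_self n, hbi, by
      simp only [mem_iInter]; exact fun m _ => hBUx (f m) hb⟩
  -- locally finite refinements
  obtain ⟨𝓥, h𝓥o, h𝓥lf, h𝓥cov, h𝓥ref⟩ := hcp A hA (range V') (countable_range _)
    (by rintro u ⟨n, rfl⟩; exact hV'o n) hAcov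
  obtain ⟨𝓦, h𝓦o, h𝓦lf, h𝓦cov, h𝓦ref⟩ := hcp B hB (range W') (countable_range _)
    (by rintro u ⟨n, rfl⟩; exact hW'o n) hBcov
  refine ⟨⋃₀ 𝓥, ⋃₀ 𝓦, isOpen_sUnion h𝓥o, isOpen_sUnion h𝓦o, h𝓥cov, h𝓦cov, ?_⟩
  have hclU : closure (⋃₀ 𝓥) = ⋃ v : 𝓥, closure (v : Set X) := by
    rw [sUnion_eq_iUnion]; exact h𝓥lf.closure_iUnion
  have hclV : closure (⋃₀ 𝓦) = ⋃ w : 𝓦, closure (w : Set X) := by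
    rw [sUnion_eq_iUnion]; exact h𝓦lf.closure_iUnion
  rw [hclU, hclV]
  ext x
  simp only [mem_inter_iff, mem_iUnion, mem_empty_iff_false, iff_false, not_and]
  rintro ⟨v, hxv⟩ ⟨w, hxw⟩
  obtain ⟨_, ⟨n, rfl⟩, hvV⟩ := h𝓥ref v v.2
  obtain ⟨_, ⟨m, rfl⟩, hwW⟩ := h𝓦ref w w.2
  have hxv' : x ∈ closure (V' n) := closure_mono hvV hxv
  have hxw' : x ∈ closure (W' m) := closure_mono hwW hxw
  rcases le_total n m with hnm | hmn
  · -- W' m ⊆ Ux (f n), V' n ⊆ Vx (f n)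
    have h1 : x ∈ closure (Ux (f n)) :=
      closure_mono (fun z hz => by
        have := hz.2
        simp only [mem_iInter] at this
        exact this n (Finset.mem_range.mpr (Nat.lt_succ_of_le hnm))) hxw'
    have h2 : x ∈ closure (Vx (f n)) := closure_mono inter_subset_left hxv'
    exact absurd (hdisx (f n)) (by rw [eq_empty_iff_forall_notMem] at *; exact fun h => h x ⟨h1, h2⟩)
  · have h1 : x ∈ closure (Oy (g m)) :=
      closure_mono (fun z hz => by
        have := hz.2
        simp only [mem_iInter] at this
        exact this m (Finset.mem_range.mpr (Nat.lt_succ_of_le hmn))) hxv'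
    have h2 : x ∈ closure (Wy (g m)) := closure_mono inter_subset_left hxw'
    exact absurd (hdisy (g m)) (by rw [eq_empty_iff_forall_notMem] at *; exact fun h => h x ⟨h1, h2⟩)
end

section
/- Let X be a regular topological space and let 𝓕 be the family of all closed subsets of X that are paracompact in X. Then X is totally 𝓕-normal. -/
universe u

open Cardinal Set Topology

/-- A subset `Y` of a topological space `X` is paracompact in `X` if every cover of `Y` by open
subsets of `X` admits a locally finite (in `X`) refinement by open subsets of `X` covering `Y`. -/
def ParacompactIn (X : Type u) [TopologicalSpace X] (Y : Set X) : Prop :=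
  ∀ U : Set (Set X), (∀ u ∈ U, IsOpen u) → Y ⊆ ⋃₀ U →
    ∃ V : Set (Set X), (∀ v ∈ V, IsOpen v) ∧
      LocallyFinite (fun v : V => (v : Set X)) ∧
      Y ⊆ ⋃₀ V ∧ ∀ v ∈ V, ∃ u ∈ U, v ⊆ u

/- As for compact sets (`IsCompact.exists_isOpen_closure_subset`): shrink around each point by
regularity, refine to a locally finite family, and use that the closure of a locally finite
union is the union of the closures. -/
theorem ParacompactIn.exists_isOpen_closure_subset {X : Type u} [TopologicalSpace X]
    [RegularSpace X] {A U : Set X} (hA : ParacompactIn X A) (hU : U ∈ 𝓝ˢ A) :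
    ∃ V, IsOpen V ∧ A ⊆ V ∧ closure V ⊆ U := by
  have hcover : A ⊆ ⋃₀ {u | IsOpen u ∧ closure u ⊆ U} := fun x hx ↦ by
    obtain ⟨u, ⟨hxu, hu⟩, huU⟩ :=
      (hasBasis_opens_closure x).mem_iff.1 (mem_nhdsSet_iff_forall.1 hU x hx)
    exact ⟨u, ⟨hu, huU⟩, hxu⟩
  obtain ⟨𝓥, h𝓥open, h𝓥lf, hA𝓥, h𝓥ref⟩ := hA _ (fun u hu ↦ hu.1) hcover
  refine ⟨⋃₀ 𝓥, isOpen_sUnion h𝓥open, hA𝓥, ?_⟩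
  rw [sUnion_eq_iUnion, h𝓥lf.closure_iUnion]
  refine iUnion_subset fun v ↦ ?_
  obtain ⟨u, ⟨-, huU⟩, hvu⟩ := h𝓥ref v v.2
  exact (closure_mono hvu).trans huU

/-- Every regular space `X` is totally `𝓕`-normal, where `𝓕` is the family of all closed
subsets of `X` that are paracompact in `X`. -/
theorem totallyFNormal_of_regularSpace {X : Type u} [TopologicalSpace X] [RegularSpace X] :
    TotallyFNormal X {A : Set X | IsClosed A ∧ ParacompactIn X A} := by
  rintro A ⟨-, hA⟩ B hB hAB
  obtain ⟨V, hVopen, hAV, hVB⟩ :=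
    hA.exists_isOpen_closure_subset (hB.isOpen_compl.mem_nhdsSet.2 hAB.subset_compl_right)
  exact ⟨V, (closure V)ᶜ, hVopen, isClosed_closure.isOpen_compl, hAV, subset_compl_comm.1 hVB,
    disjoint_compl_right.mono_right (compl_subset_compl.2 subset_closure)⟩
end

section
/- For every infinite cardinal κ, every κ-bounded Urysohn topological space is strongly κ̄-normal. -/
universe u

open Cardinal Set Topology

/-- A topological space is `κ`-bounded if the closure of every subset of cardinality at most `κ`
is compact. -/
def KappaBounded (κ : Cardinal.{u}) (X : Type u) [TopologicalSpace X] : Prop :=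
  ∀ S : Set X, #S ≤ κ → IsCompact (closure S)

/-- The family `𝓕_κ(X)` of all closed subsets of `X` contained in the closure of some subset
of `X` of cardinality at most `κ`. -/
def FamilyKappa (κ : Cardinal.{u}) (X : Type u) [TopologicalSpace X] : Set (Set X) :=
  {F | IsClosed F ∧ ∃ C : Set X, #C ≤ κ ∧ F ⊆ closure C}

/-- A topological space is Urysohn if any two distinct points have open neighborhoods with
disjoint closures. -/
def UrysohnSpace (X : Type u) [TopologicalSpace X] : Prop :=
  ∀ x y : X, x ≠ y → ∃ U V : Set X,
    IsOpen U ∧ IsOpen V ∧ x ∈ U ∧ y ∈ V ∧ closure U ∩ closure V = ∅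

lemma urysohn_point_compact {X : Type u} [TopologicalSpace X] (hu : UrysohnSpace X)
    {B : Set X} (hB : IsCompact B) {x : X} (hx : x ∉ B) :
    ∃ U V : Set X, IsOpen U ∧ IsOpen V ∧ x ∈ U ∧ B ⊆ V ∧ closure U ∩ closure V = ∅ := by
  have h : ∀ y ∈ B, ∃ U V : Set X,
      IsOpen U ∧ IsOpen V ∧ x ∈ U ∧ y ∈ V ∧ closure U ∩ closure V = ∅ := by
    intro y hy
    exact hu x y (fun h => hx (h ▸ hy))
  choose! U V hUo hVo hxU hyV hdis using h
  obtain ⟨t, htB, hcover⟩ := hB.elim_nhds_subcover V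
    (fun y hy => (hVo y hy).mem_nhds (hyV y hy))
  refine ⟨⋂ y ∈ t, U y, ⋃ y ∈ t, V y, isOpen_biInter_finset (fun y hy => hUo y (htB y hy)),
    isOpen_biUnion (fun y hy => hVo y (htB y hy)),
    mem_iInter₂.2 (fun y hy => hxU y (htB y hy)), hcover, ?_⟩
  ext z
  simp only [mem_inter_iff, mem_empty_iff_false, iff_false, not_and]
  intro hzU hzV
  have hzV' : z ∈ ⋃ y ∈ t, closure (V y) := by
    have : closure (⋃ y ∈ t, V y) ⊆ ⋃ y ∈ t, closure (V y) :=
      closure_minimal (iUnion₂_mono fun y _ => subset_closure)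
        (isClosed_biUnion_finset fun y _ => isClosed_closure)
    exact this hzV
  obtain ⟨y, hy, hzy⟩ := mem_iUnion₂.1 hzV'
  have hzU' : z ∈ closure (U y) :=
    closure_mono (iInter₂_subset y hy) hzU
  have : z ∈ closure (U y) ∩ closure (V y) := ⟨hzU', hzy⟩
  rw [hdis y (htB y hy)] at this
  exact this

lemma urysohn_compact_compact {X : Type u} [TopologicalSpace X] (hu : UrysohnSpace X)
    {A B : Set X} (hA : IsCompact A) (hB : IsCompact B) (hd : Disjoint A B) :
    ∃ U V : Set X, IsOpen U ∧ IsOpen V ∧ A ⊆ U ∧ B ⊆ V ∧ closure U ∩ closure V = ∅ := by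
  have h : ∀ x ∈ A, ∃ U V : Set X,
      IsOpen U ∧ IsOpen V ∧ x ∈ U ∧ B ⊆ V ∧ closure U ∩ closure V = ∅ :=
    fun x hx => urysohn_point_compact hu hB (fun hxB => hd.ne_of_mem hx hxB rfl)
  choose! U V hUo hVo hxU hBV hdis using h
  obtain ⟨t, htA, hcover⟩ := hA.elim_nhds_subcover U
    (fun x hx => (hUo x hx).mem_nhds (hxU x hx))
  by_cases ht : t.Nonempty
  · refine ⟨⋃ x ∈ t, U x, ⋂ x ∈ t, V x,
      isOpen_biUnion (fun x hx => hUo x (htA x hx)),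
      isOpen_biInter_finset (fun x hx => hVo x (htA x hx)),
      hcover, subset_iInter₂ (fun x hx => hBV x (htA x hx)), ?_⟩
    ext z
    simp only [mem_inter_iff, mem_empty_iff_false, iff_false, not_and]
    intro hzU hzV
    have hzU' : z ∈ ⋃ x ∈ t, closure (U x) := by
      have : closure (⋃ x ∈ t, U x) ⊆ ⋃ x ∈ t, closure (U x) :=
        closure_minimal (iUnion₂_mono fun x _ => subset_closure)
          (isClosed_biUnion_finset fun x _ => isClosed_closure)
      exact this hzU
    obtain ⟨x, hx, hzx⟩ := mem_iUnion₂.1 hzU'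
    have : z ∈ closure (U x) ∩ closure (V x) :=
      ⟨hzx, closure_mono (iInter₂_subset x hx) hzV⟩
    rw [hdis x (htA x hx)] at this
    exact this
  · rw [Finset.not_nonempty_iff_eq_empty] at ht
    subst ht
    simp only [Finset.notMem_empty, iUnion_of_empty, iUnion_empty] at hcover
    have hAe : A = ∅ := subset_empty_iff.1 hcover
    exact ⟨∅, univ, isOpen_empty, isOpen_univ, hAe ▸ Subset.rfl, subset_univ _, by simp⟩

/-- Every `κ`-bounded Urysohn space is strongly `κ̄`-normal. -/
theorem stronglyFNormal_of_kappaBounded_urysohn {X : Type u} [TopologicalSpace X]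
    (κ : Cardinal.{u}) (hκ : ℵ₀ ≤ κ) (hb : KappaBounded κ X) (hu : UrysohnSpace X) :
    StronglyFNormal X (FamilyKappa κ X) := by
  rintro A ⟨hAc, CA, hCA, hACA⟩ B ⟨hBc, CB, hCB, hBCB⟩ hd
  have hAcomp : IsCompact A := (hb CA hCA).of_isClosed_subset hAc hACA
  have hBcomp : IsCompact B := (hb CB hCB).of_isClosed_subset hBc hBCB
  exact urysohn_compact_compact hu hAcomp hBcomp hd
end

section
/- For every infinite cardinal κ, every subspace X of a κ-bounded Hausdorff topological space Y is κ̄-regular. -/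
universe u

open Cardinal Set Topology

/-- Every subspace `X` of a `κ`-bounded Hausdorff space `Y` is `κ̄`-regular. -/
theorem fRegular_subspace_of_kappaBounded_t2 {Y : Type u} [TopologicalSpace Y] [T2Space Y]
    (κ : Cardinal.{u}) (hκ : ℵ₀ ≤ κ) (hb : KappaBounded κ Y) (X : Set Y) :
    FRegular X (FamilyKappa κ X) :=  by
  rintro A ⟨hAcl, C, hC, hAC⟩ x hx
  -- work in Y
  set C' : Set Y := Subtype.val '' C with hC'
  have hC'card : #C' ≤ κ := le_trans (Cardinal.mk_image_le) hC
  have hK : IsCompact (closure C') := hb C' hC'card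
  -- F = closure in Y of image of A
  set F : Set Y := closure (Subtype.val '' A) with hF
  have hsub : F ⊆ closure C' := by
    apply closure_minimal _ isClosed_closure
    rintro y ⟨a, haA, rfl⟩
    have := hAC haA
    rw [IsEmbedding.subtypeVal.closure_eq_preimage_closure_image C] at this
    exact this
  have hFcomp : IsCompact F := hK.of_isClosed_subset isClosed_closure hsub
  have hxF : (x : Y) ∉ F := by
    intro hmem
    apply hx
    have : x ∈ closure A := by
      rw [IsEmbedding.subtypeVal.closure_eq_preimage_closure_image A]
      exact hmem
    rwa [hAcl.closure_eq] at this
  obtain ⟨U, V, hU, hV, hFU, hxV, hUV⟩ := hFcomp.separation_of_notMem hxF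
  refine ⟨Subtype.val ⁻¹' U, Subtype.val ⁻¹' V, hU.preimage continuous_subtype_val,
    hV.preimage continuous_subtype_val, ?_, hxV, hUV.preimage _⟩
  intro a haA
  exact hFU (subset_closure ⟨a, haA, rfl⟩)
end

section
/- For every infinite cardinal κ, every subspace X of a κ-bounded Urysohn topological space Y is strongly κ̄-regular. -/
universe u

open Cardinal Set Topology

/-!
A set `A ∈ 𝓕_κ(X)` lies in the closure of a set of size at most `κ`, so by `κ`-boundedness its
closure `K` in `Y` is compact. Separating `x ∉ K` from each point of `K` by neighbourhoods with
disjoint closures and taking a finite subcover of `K` separates `K` from `x` in the same way; since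
the inclusion `X → Y` maps closures into closures, these neighbourhoods pull back to `X`.
-/

open Filter

theorem UrysohnSpace.t25Space {Y : Type u} [TopologicalSpace Y] (hu : UrysohnSpace Y) :
    T25Space Y where
  t2_5 x y hxy := by
    obtain ⟨U, V, hU, hV, hxU, hyV, hUV⟩ := hu x y hxy
    exact ((nhds_basis_opens x).lift'_closure.disjoint_iff (nhds_basis_opens y).lift'_closure).2
      ⟨U, ⟨hxU, hU⟩, V, ⟨hyV, hV⟩, Set.disjoint_iff_inter_eq_empty.2 hUV⟩

theorem IsCompact.disjoint_lift'_closure_nhdsSet_left {X : Type u} [TopologicalSpace X]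
    {K : Set X} {l : Filter X} (hK : IsCompact K)
    (h : ∀ x ∈ K, Disjoint ((𝓝 x).lift' closure) l) : Disjoint ((𝓝ˢ K).lift' closure) l := by
  choose! U hU hUl using fun x hx => (nhds_basis_opens x).lift'_closure.disjoint_iff_left.1 (h x hx)
  obtain ⟨t, htK, hKt⟩ := hK.elim_nhds_subcover U fun x hx => (hU x hx).2.mem_nhds (hU x hx).1
  refine (hasBasis_nhdsSet K).lift'_closure.disjoint_iff_left.2
    ⟨⋃ x ∈ t, U x, ⟨isOpen_biUnion fun x hx => (hU x (htK x hx)).2, hKt⟩, ?_⟩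
  rw [t.closure_biUnion, compl_iUnion₂, biInter_finset_mem]
  exact fun x hx => hUl x (htK x hx)

theorem IsCompact.disjoint_lift'_closure_nhdsSet_nhds {X : Type u} [TopologicalSpace X]
    [T25Space X] {K : Set X} {x : X} (hK : IsCompact K) (hx : x ∉ K) :
    Disjoint ((𝓝ˢ K).lift' closure) ((𝓝 x).lift' closure) :=
  hK.disjoint_lift'_closure_nhdsSet_left fun _ hy =>
    disjoint_lift'_closure_nhds.2 (ne_of_mem_of_not_mem hy hx)

theorem stronglyFRegular_of_disjoint_lift'_closure {X : Type u} [TopologicalSpace X]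
    {F : Set (Set X)}
    (h : ∀ A ∈ F, ∀ x ∉ A, Disjoint ((𝓝ˢ A).lift' closure) ((𝓝 x).lift' closure)) :
    StronglyFRegular X F := by
  intro A hA x hx
  obtain ⟨U, ⟨hU, hAU⟩, V, ⟨hxV, hV⟩, hUV⟩ :=
    ((hasBasis_nhdsSet A).lift'_closure.disjoint_iff (nhds_basis_opens x).lift'_closure).1
      (h A hA x hx)
  exact ⟨U, V, hU, hV, hAU, hxV, Set.disjoint_iff_inter_eq_empty.1 hUV⟩

theorem KappaBounded.isCompact_closure_image {κ : Cardinal.{u}} {X Y : Type u}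
    [TopologicalSpace X] [TopologicalSpace Y] (hb : KappaBounded κ Y) {f : X → Y}
    (hf : Continuous f) {A : Set X} (hA : A ∈ FamilyKappa κ X) : IsCompact (closure (f '' A)) := by
  obtain ⟨-, C, hC, hAC⟩ := hA
  have hAC' : closure (f '' A) ⊆ closure (f '' C) :=
    closure_minimal ((image_mono hAC).trans (image_closure_subset_closure_image hf))
      isClosed_closure
  exact (hb _ (mk_image_le.trans hC)).of_isClosed_subset isClosed_closure hAC'

theorem stronglyFRegular_subspace_of_kappaBounded_urysohn_general {Y : Type u} [TopologicalSpace Y]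
    (κ : Cardinal.{u}) (hb : KappaBounded κ Y) (hu : UrysohnSpace Y) (X : Set Y) :
    StronglyFRegular X (FamilyKappa κ X) := by
  have := hu.t25Space
  refine stronglyFRegular_of_disjoint_lift'_closure fun A hA x hxA => ?_
  set K := closure (Subtype.val '' A)
  have hK : IsCompact K := hb.isCompact_closure_image continuous_subtype_val hA
  have hxK : (x : Y) ∉ K := by
    rwa [← mem_preimage, ← IsEmbedding.subtypeVal.closure_eq_preimage_closure_image,
      hA.1.closure_eq]
  have hAK : Tendsto Subtype.val ((𝓝ˢ A).lift' closure) ((𝓝ˢ K).lift' closure) :=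
    ((continuous_subtype_val.tendsto_nhdsSet (mapsTo_image _ A)).mono_right
      (nhdsSet_mono subset_closure)).lift'_closure continuous_subtype_val
  exact hAK.disjoint (hK.disjoint_lift'_closure_nhdsSet_nhds hxK)
    (tendsto_lift'_closure_nhds continuous_subtype_val x)

/-- Every subspace `X` of a `κ`-bounded Urysohn space `Y` is strongly `κ̄`-regular. -/
theorem stronglyFRegular_subspace_of_kappaBounded_urysohn {Y : Type u} [TopologicalSpace Y]
    (κ : Cardinal.{u}) (hκ : ℵ₀ ≤ κ) (hb : KappaBounded κ Y) (hu : UrysohnSpace Y) (X : Set Y) :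
    StronglyFRegular X (FamilyKappa κ X) :=
  stronglyFRegular_subspace_of_kappaBounded_urysohn_general κ hb hu X
end

section
/- Let κ be an infinite cardinal, let Y be a κ-bounded Hausdorff topological space, and let X be a subspace of Y whose density is at most κ. Then X is Tychonoff (i.e., T1 and completely regular). -/
universe u

open Cardinal Set Topology

lemma IsCompact.completelyRegularSpace_of_subset {Y : Type*} [TopologicalSpace Y] [T2Space Y]
    {K X : Set Y} (hK : IsCompact K) (hXK : X ⊆ K) : CompletelyRegularSpace X :=
  have : CompactSpace K := isCompact_iff_compactSpace.mp hK
  (IsEmbedding.inclusion hXK).isInducing.completelyRegularSpace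

theorem tychonoff_subspace_of_kappaBounded_t2_general {Y : Type u} [TopologicalSpace Y] [T2Space Y]
    (κ : Cardinal.{u}) (hb : KappaBounded κ Y) (X : Set Y)
    (hd : ∃ D : Set Y, D ⊆ X ∧ #D ≤ κ ∧ X ⊆ closure D) :
    T1Space X ∧ CompletelyRegularSpace X := by
  obtain ⟨D, -, hDκ, hXD⟩ := hd
  exact ⟨inferInstance, (hb D hDκ).completelyRegularSpace_of_subset hXD⟩

/-- Every subspace of density at most `κ` of a `κ`-bounded Hausdorff space is Tychonoff
(i.e. `T₁` and completely regular). -/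
theorem tychonoff_subspace_of_kappaBounded_t2 {Y : Type u} [TopologicalSpace Y] [T2Space Y]
    (κ : Cardinal.{u}) (hκ : ℵ₀ ≤ κ) (hb : KappaBounded κ Y) (X : Set Y)
    (hd : ∃ D : Set Y, D ⊆ X ∧ #D ≤ κ ∧ X ⊆ closure D) :
    T1Space X ∧ CompletelyRegularSpace X :=
  tychonoff_subspace_of_kappaBounded_t2_general κ hb X hd
end

section
/- Let κ be an infinite cardinal and X a T1 topological space. Then the Wallman κ-bounded extension W_κ̄X is a κ-bounded space: the closure in W_κ̄X of any subset of W_κ̄X of cardinality at most κ is compact. -/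
universe u

open Cardinal Set Topology

/-- A closed ultrafilter on a topological space `X`: a family of closed sets not containing `∅`,
closed under binary intersections, and containing every closed set that meets all its members. -/
structure ClosedUltrafilter (X : Type u) [TopologicalSpace X] : Type u where
  sets : Set (Set X)
  isClosed_of_mem : ∀ F ∈ sets, IsClosed F
  empty_not_mem : ∅ ∉ sets
  inter_mem : ∀ A ∈ sets, ∀ B ∈ sets, A ∩ B ∈ sets
  mem_of_forall_inter : ∀ F : Set X, IsClosed F → (∀ A ∈ sets, (F ∩ A).Nonempty) → F ∈ sets

/-- The topology of the Wallman extension `wX`, generated by the sets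
`⟨U⟩ = {𝓕 ∈ wX : ∃ F ∈ 𝓕, F ⊆ U}` for `U` open in `X`. -/
instance ClosedUltrafilter.instTopologicalSpace (X : Type u) [TopologicalSpace X] :
    TopologicalSpace (ClosedUltrafilter X) :=
  TopologicalSpace.generateFrom
    {S | ∃ U : Set X, IsOpen U ∧ S = {u : ClosedUltrafilter X | ∃ F ∈ u.sets, F ⊆ U}}

/-- The canonical map `j_X : X → wX` sending a point `x` to the principal closed ultrafilter
of all closed sets containing `x`. -/
def wallmanMap (X : Type u) [TopologicalSpace X] [T1Space X] (x : X) : ClosedUltrafilter X where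
  sets := {F | IsClosed F ∧ x ∈ F}
  isClosed_of_mem := fun _ hF => hF.1
  empty_not_mem := fun h => h.2
  inter_mem := fun A hA B hB => ⟨hA.1.inter hB.1, hA.2, hB.2⟩
  mem_of_forall_inter := fun F hF h => by
    obtain ⟨y, hyF, hyx⟩ := h {x} ⟨isClosed_singleton, rfl⟩
    exact ⟨hF, hyx ▸ hyF⟩

/-- The Wallman `κ`-bounded extension `W_κ̄X ⊆ wX`: the union of the closures (in `wX`) of the
images `j_X(C)` of subsets `C ⊆ X` of cardinality at most `κ`. -/
def WallmanKappa (κ : Cardinal.{u}) (X : Type u) [TopologicalSpace X] [T1Space X] :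
    Set (ClosedUltrafilter X) :=
  ⋃ C ∈ {C : Set X | #C ≤ κ}, closure (wallmanMap X '' C)

namespace ClosedUltrafilter

variable {X : Type u} [TopologicalSpace X]

theorem nonempty_of_mem (u : ClosedUltrafilter X) {A : Set X} (hA : A ∈ u.sets) : A.Nonempty := by
  rcases A.eq_empty_or_nonempty with rfl | h
  · exact absurd hA u.empty_not_mem
  · exact h

theorem univ_mem (u : ClosedUltrafilter X) : (Set.univ : Set X) ∈ u.sets :=
  u.mem_of_forall_inter Set.univ isClosed_univ fun A hA => by
    simpa using u.nonempty_of_mem hA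

theorem exists_mem_subset_of_compl_not_mem (u : ClosedUltrafilter X) {U : Set X}
    (hU : IsOpen U) (h : Uᶜ ∉ u.sets) : ∃ F ∈ u.sets, F ⊆ U := by
  by_contra hc
  push_neg at hc
  refine h (u.mem_of_forall_inter Uᶜ hU.isClosed_compl fun A hA => ?_)
  rcases not_subset.1 (hc A hA) with ⟨x, hxA, hxU⟩
  exact ⟨x, hxU, hxA⟩

theorem compl_not_mem_of_exists (u : ClosedUltrafilter X) {U : Set X}
    (h : ∃ F ∈ u.sets, F ⊆ U) : Uᶜ ∉ u.sets := by
  rcases h with ⟨F, hF, hFU⟩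
  intro hc
  have : F ∩ Uᶜ ∈ u.sets := u.inter_mem F hF Uᶜ hc
  have he : F ∩ Uᶜ = ∅ := by
    apply eq_empty_of_forall_notMem
    rintro x ⟨hxF, hxU⟩
    exact hxU (hFU hxF)
  exact u.empty_not_mem (he ▸ this)

/-- Every family of closed sets with the (strong) finite intersection property extends to a
closed ultrafilter. -/
theorem exists_superset (T : Set (Set X)) (hTc : ∀ F ∈ T, IsClosed F)
    (hfip : ∀ s ⊆ T, s.Finite → (⋂₀ insert Set.univ s).Nonempty) :
    ∃ u : ClosedUltrafilter X, T ⊆ u.sets := by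
  set coll : Set (Set (Set X)) :=
    {S | T ⊆ S ∧ (∀ F ∈ S, IsClosed F) ∧
      ∀ s ⊆ S, s.Finite → (⋂₀ insert Set.univ s).Nonempty} with hcoll
  have chainH : ∀ c ⊆ coll, IsChain (· ⊆ ·) c → c.Nonempty →
      ∃ ub ∈ coll, ∀ s ∈ c, s ⊆ ub := by
    intro c hc hchain hcne
    refine ⟨⋃₀ c, ⟨?_, ?_, ?_⟩, fun s hs => subset_sUnion_of_mem hs⟩
    · rcases hcne with ⟨t, ht⟩
      exact ((hc ht).1).trans (subset_sUnion_of_mem ht)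
    · rintro F ⟨t, ht, hFt⟩
      exact (hc ht).2.1 F hFt
    · intro s hs hsfin
      -- find a single member of the chain containing s
      have key : ∀ s' : Set (Set X), s'.Finite → s' ⊆ ⋃₀ c → ∃ t ∈ c, s' ⊆ t := by
        intro s' hfin
        refine Set.Finite.induction_on s' hfin (motive := fun s' _ => s' ⊆ ⋃₀ c → ∃ t ∈ c, s' ⊆ t) (fun _ => ?_) ?_
        · rcases hcne with ⟨t, ht⟩; exact ⟨t, ht, empty_subset t⟩
        · rintro a s'' _ _ ih hsub
          rcases ih (fun x hx => hsub (mem_insert_of_mem a hx)) with ⟨t, htc, hst⟩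
          rcases hsub (mem_insert a s'') with ⟨t', ht'c, hat'⟩
          rcases hchain.total htc ht'c with h | h
          · exact ⟨t', ht'c, insert_subset hat' (hst.trans h)⟩
          · exact ⟨t, htc, insert_subset (h hat') hst⟩
      rcases key s hsfin hs with ⟨t, htc, hst⟩
      exact (hc htc).2.2 s hst hsfin
  obtain ⟨m, hTm, hm⟩ := zorn_subset_nonempty coll chainH T ⟨Subset.rfl, hTc, hfip⟩
  obtain ⟨hTm', hmc, hmfip⟩ := hm.prop
  -- a general lemma for adjoining a set to the maximal family
  have adjoin : ∀ B : Set X, IsClosed B →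
      (∀ t ⊆ m, t.Finite → (B ∩ ⋂₀ insert Set.univ t).Nonempty) → B ∈ m := by
    intro B hBc hBN
    have : insert B m ∈ coll := by
      refine ⟨hTm'.trans (subset_insert B m), ?_, ?_⟩
      · rintro F (rfl | hF)
        · exact hBc
        · exact hmc F hF
      · intro s hs hsfin
        have ht : s \ {B} ⊆ m := by
          rintro G ⟨hGs, hGB⟩
          rcases hs hGs with rfl | h
          · exact absurd rfl hGB
          · exact h
        rcases hBN (s \ {B}) ht hsfin.diff with ⟨x, hxB, hxt⟩
        refine ⟨x, ?_⟩
        rintro G (rfl | hGs)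
        · exact mem_univ x
        · rcases eq_or_ne G B with rfl | hne
          · exact hxB
          · exact hxt G (mem_insert_of_mem _ ⟨hGs, hne⟩)
    exact hm.2 this (subset_insert B m) (mem_insert B m)
  have huniv : (Set.univ : Set X) ∈ m := by
    refine adjoin Set.univ isClosed_univ fun t ht htfin => ?_
    simpa using hmfip t ht htfin
  have hinter : ∀ A ∈ m, ∀ B ∈ m, A ∩ B ∈ m := by
    intro A hA B hB
    refine adjoin (A ∩ B) ((hmc A hA).inter (hmc B hB)) fun t ht htfin => ?_
    have hsub : insert A (insert B t) ⊆ m :=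
      insert_subset hA (insert_subset hB ht)
    rcases hmfip _ hsub ((htfin.insert B).insert A) with ⟨x, hx⟩
    refine ⟨x, ⟨?_, ?_⟩, ?_⟩
    · exact hx A (mem_insert_of_mem _ (mem_insert A _))
    · exact hx B (mem_insert_of_mem _ (mem_insert_of_mem _ (mem_insert B t)))
    · rintro G (rfl | hGt)
      · exact trivial
      · exact hx G (mem_insert_of_mem _ (mem_insert_of_mem _ (mem_insert_of_mem _ hGt)))
  have hsInter : ∀ t ⊆ m, t.Finite → ⋂₀ insert Set.univ t ∈ m := by
    intro t ht htfin
    revert ht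
    refine Set.Finite.induction_on t htfin (motive := fun t _ => t ⊆ m → ⋂₀ insert Set.univ t ∈ m) (fun _ => ?_) ?_
    · simpa using huniv
    · intro a s _ hsfin ih hins
      have h1 : ⋂₀ insert Set.univ (insert a s) = a ∩ ⋂₀ insert Set.univ s := by
        rw [Set.insert_comm, Set.sInter_insert]
      rw [h1]
      exact hinter a (hins (mem_insert a s)) _ (ih fun x hx => hins (mem_insert_of_mem a hx))
  refine ⟨⟨m, hmc, ?_, hinter, ?_⟩, hTm'⟩
  · intro h
    rcases hmfip {∅} (singleton_subset_iff.2 h) (finite_singleton ∅) with ⟨x, hx⟩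
    exact hx ∅ (mem_insert_of_mem _ rfl)
  · intro F hFc hFmeet
    refine adjoin F hFc fun t ht htfin => ?_
    exact hFmeet _ (hsInter t ht htfin)

/-- The Wallman extension is compact. -/
instance compactSpace : CompactSpace (ClosedUltrafilter X) := by
  constructor
  rw [isCompact_iff_ultrafilter_le_nhds]
  intro f _
  set T : Set (Set X) := {F | IsClosed F ∧ {v : ClosedUltrafilter X | F ∈ v.sets} ∈ f} with hT
  have hfip : ∀ s ⊆ T, s.Finite → (⋂₀ insert Set.univ s).Nonempty := by
    intro s hs hsfin
    have key : ∀ s : Set (Set X), s.Finite → s ⊆ T →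
        {v : ClosedUltrafilter X | ⋂₀ insert Set.univ s ∈ v.sets} ∈ f := by
      intro s hsfin
      refine Set.Finite.induction_on s hsfin (motive := fun s _ => s ⊆ T → {v : ClosedUltrafilter X | ⋂₀ insert Set.univ s ∈ v.sets} ∈ f) (fun _ => ?_) ?_
      · have : ⋂₀ insert Set.univ (∅ : Set (Set X)) = Set.univ := by simp
        rw [this]
        have : {v : ClosedUltrafilter X | Set.univ ∈ v.sets} = Set.univ :=
          eq_univ_of_forall fun v => v.univ_mem
        rw [this]; exact Filter.univ_mem
      · intro a s _ _ ih hins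
        have h1 : ⋂₀ insert Set.univ (insert a s) = a ∩ ⋂₀ insert Set.univ s := by
          rw [Set.insert_comm, Set.sInter_insert]
        rw [h1]
        have ha : {v : ClosedUltrafilter X | a ∈ v.sets} ∈ f :=
          (hins (mem_insert a s)).2
        have hrest := ih fun x hx => hins (mem_insert_of_mem a hx)
        filter_upwards [ha, hrest] with v hva hvs
        exact v.inter_mem a hva _ hvs
    rcases f.nonempty_of_mem (key s hsfin hs) with ⟨v, hv⟩
    exact v.nonempty_of_mem hv
  obtain ⟨u, hTu⟩ := exists_superset T (fun F hF => hF.1) hfip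
  refine ⟨u, mem_univ u, ?_⟩
  rw [ClosedUltrafilter.instTopologicalSpace, TopologicalSpace.nhds_generateFrom]
  refine le_iInf₂ fun s hs => ?_
  obtain ⟨hus, U, hU, rfl⟩ := hs
  rw [Filter.le_principal_iff]
  have hcompl : Uᶜ ∉ u.sets := u.compl_not_mem_of_exists hus
  have hcT : Uᶜ ∉ T := fun h => hcompl (hTu h)
  have : {v : ClosedUltrafilter X | Uᶜ ∈ v.sets} ∉ f := fun h => hcT ⟨hU.isClosed_compl, h⟩
  have hmem := (Ultrafilter.compl_mem_iff_notMem.2 this)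
  have heq : {v : ClosedUltrafilter X | Uᶜ ∈ v.sets}ᶜ
      = {v : ClosedUltrafilter X | ∃ F ∈ v.sets, F ⊆ U} := by
    ext v
    simp only [mem_compl_iff, mem_setOf_eq]
    constructor
    · exact fun h => v.exists_mem_subset_of_compl_not_mem hU h
    · exact fun h => v.compl_not_mem_of_exists h
  rwa [heq] at hmem

end ClosedUltrafilter

/-- For every infinite cardinal `κ` and `T₁`-space `X`, the Wallman `κ`-bounded extension
`W_κ̄X` is a `κ`-bounded space. -/
theorem kappaBounded_wallmanKappa {X : Type u} [TopologicalSpace X] [T1Space X]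
    (κ : Cardinal.{u}) (hκ : ℵ₀ ≤ κ) :
    KappaBounded κ (WallmanKappa κ X) := by
  intro S hS
  -- choose, for each point of S, a witnessing set C of size ≤ κ
  have hchoice : ∀ s : S, ∃ C : Set X, #C ≤ κ ∧
      (s : ClosedUltrafilter X) ∈ closure (wallmanMap X '' C) := by
    rintro ⟨⟨v, hv⟩, _⟩
    simp only [WallmanKappa, mem_iUnion, mem_setOf_eq] at hv
    rcases hv with ⟨C, hC, hvC⟩
    exact ⟨C, hC, hvC⟩
  choose Cs hCs1 hCs2 using hchoice
  set C : Set X := ⋃ s : S, Cs s with hCdef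
  have hC : #C ≤ κ := by
    calc #C ≤ #S * ⨆ s : S, #(Cs s) := mk_iUnion_le _
    _ ≤ κ * κ := mul_le_mul' hS (ciSup_le' hCs1)
    _ = κ := mul_eq_self hκ
  set K : Set (ClosedUltrafilter X) := closure (wallmanMap X '' C) with hKdef
  have hKcompact : IsCompact K := isClosed_closure.isCompact
  have hKW : K ⊆ WallmanKappa κ X := by
    intro v hv
    simp only [WallmanKappa, mem_iUnion, mem_setOf_eq]
    exact ⟨C, hC, hv⟩
  have hSK : ∀ s : S, (s : ClosedUltrafilter X) ∈ K := fun s =>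
    closure_mono (image_mono (subset_iUnion (fun s : S => Cs s) s)) (hCs2 s)
  -- now transfer compactness along the embedding
  have hemb : IsEmbedding ((↑) : (WallmanKappa κ X) → ClosedUltrafilter X) :=
    IsEmbedding.subtypeVal
  rw [hemb.isCompact_iff]
  have hclS : closure S
      = (↑) ⁻¹' closure (((↑) : (WallmanKappa κ X) → ClosedUltrafilter X) '' S) :=
    hemb.closure_eq_preimage_closure_image S
  have himgK : closure (((↑) : (WallmanKappa κ X) → ClosedUltrafilter X) '' S) ⊆ K := by
    apply closure_minimal _ isClosed_closure
    rintro _ ⟨s, hsS, rfl⟩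
    exact hSK ⟨s, hsS⟩
  rw [hclS, Set.image_preimage_eq_inter_range, Subtype.range_coe_subtype]
  have : closure (((↑) : (WallmanKappa κ X) → ClosedUltrafilter X) '' S)
      ∩ {x | x ∈ WallmanKappa κ X}
      = closure (((↑) : (WallmanKappa κ X) → ClosedUltrafilter X) '' S) :=
    inter_eq_self_of_subset_left (himgK.trans hKW)
  rw [this]
  exact isClosed_closure.isCompact
end

section
/- Let κ be an infinite cardinal and X a T1 topological space. The Wallman κ-bounded extension W_κ̄X is regular if and only if X is totally κ̄-normal. -/
universe u

open Cardinal Set Topology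

namespace WallmanAux

variable {X : Type u} [TopologicalSpace X]

/-- The basic open set `⟨U⟩` of the Wallman topology. -/
def basicOpen (U : Set X) : Set (ClosedUltrafilter X) := {u | ∃ F ∈ u.sets, F ⊆ U}

lemma isOpen_basicOpen {U : Set X} (hU : IsOpen U) : IsOpen (basicOpen U) :=
  TopologicalSpace.isOpen_generateFrom_of_mem ⟨U, hU, rfl⟩

lemma nonempty_of_mem (u : ClosedUltrafilter X) {A : Set X} (hA : A ∈ u.sets) : A.Nonempty := by
  rcases eq_empty_or_nonempty A with rfl | h
  · exact absurd hA u.empty_not_mem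
  · exact h

lemma univ_mem (u : ClosedUltrafilter X) : Set.univ ∈ u.sets :=
  u.mem_of_forall_inter _ isClosed_univ fun A hA => by
    simpa using nonempty_of_mem u hA

lemma superset_mem (u : ClosedUltrafilter X) {F G : Set X} (hF : F ∈ u.sets)
    (hG : IsClosed G) (hFG : F ⊆ G) : G ∈ u.sets :=
  u.mem_of_forall_inter G hG fun A hA => by
    obtain ⟨x, hx⟩ := nonempty_of_mem u (u.inter_mem F hF A hA)
    exact ⟨x, hFG hx.1, hx.2⟩

lemma compl_mem_iff (u : ClosedUltrafilter X) {U : Set X} (hU : IsOpen U) :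
    Uᶜ ∈ u.sets ↔ u ∉ basicOpen U := by
  constructor
  · rintro h ⟨F, hF, hFU⟩
    have hmem := u.inter_mem F hF Uᶜ h
    have hempty : F ∩ Uᶜ = ∅ :=
      Set.eq_empty_iff_forall_notMem.mpr fun x hx => hx.2 (hFU hx.1)
    exact u.empty_not_mem (hempty ▸ hmem)
  · intro h
    refine u.mem_of_forall_inter Uᶜ hU.isClosed_compl fun A hA => ?_
    rw [Set.nonempty_iff_ne_empty]
    intro hemp
    exact h ⟨A, hA, fun x hx => by_contra fun hxU =>
      (Set.eq_empty_iff_forall_notMem.mp hemp x) ⟨hxU, hx⟩⟩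

lemma star_eq_compl {K : Set X} (hK : IsClosed K) :
    {u : ClosedUltrafilter X | K ∈ u.sets} = (basicOpen Kᶜ)ᶜ := by
  ext u
  simp only [Set.mem_setOf_eq, Set.mem_compl_iff]
  rw [← compl_mem_iff u hK.isOpen_compl, compl_compl]

lemma isClosed_star {K : Set X} (hK : IsClosed K) :
    IsClosed {u : ClosedUltrafilter X | K ∈ u.sets} := by
  rw [star_eq_compl hK]
  exact (isOpen_basicOpen hK.isOpen_compl).isClosed_compl

lemma sInter_mem (u : ClosedUltrafilter X) {t : Set (Set X)} (ht : t.Finite) :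
    t ⊆ u.sets → ⋂₀ t ∈ u.sets := by
  refine Set.Finite.induction_on (motive := fun t _ => t ⊆ u.sets → ⋂₀ t ∈ u.sets) t ht
    (fun _ => by simpa using univ_mem u) ?_
  intro a s _ _ ih hsub
  rw [Set.sInter_insert]
  exact u.inter_mem a (hsub (Set.mem_insert a s)) _
    (ih fun x hx => hsub (Set.mem_insert_of_mem a hx))

end WallmanAux
namespace WallmanAux

variable {X : Type u} [TopologicalSpace X]

/-- The finite intersection property for a family of sets. -/
def FIP (G : Set (Set X)) : Prop := ∀ t ⊆ G, t.Finite → (⋂₀ t).Nonempty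

omit [TopologicalSpace X] in
lemma chain_finite_subset {c : Set (Set (Set X))} (hc : IsChain (· ⊆ ·) c)
    (hne : c.Nonempty) {t : Set (Set X)} (ht : t.Finite) :
    t ⊆ ⋃₀ c → ∃ H ∈ c, t ⊆ H := by
  refine Set.Finite.induction_on (motive := fun t _ => t ⊆ ⋃₀ c → ∃ H ∈ c, t ⊆ H) t ht
    (fun _ => ⟨hne.choose, hne.choose_spec, Set.empty_subset _⟩) ?_
  intro a s _ _ ih hsub
  obtain ⟨H, hHc, hsH⟩ := ih fun x hx => hsub (Set.mem_insert_of_mem a hx)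
  obtain ⟨H', hH'c, haH'⟩ := hsub (Set.mem_insert a s)
  rcases eq_or_ne H H' with rfl | hne'
  · exact ⟨H, hHc, Set.insert_subset haH' hsH⟩
  rcases hc hHc hH'c hne' with h | h
  · exact ⟨H', hH'c, Set.insert_subset haH' (hsH.trans h)⟩
  · exact ⟨H, hHc, Set.insert_subset (h haH') hsH⟩

lemma exists_closedUltrafilter (G : Set (Set X)) (hcl : ∀ F ∈ G, IsClosed F)
    (hfip : FIP G) : ∃ u : ClosedUltrafilter X, G ⊆ u.sets := by
  classical
  set G₁ : Set (Set X) := insert Set.univ G with hG₁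
  have hG₁cl : ∀ F ∈ G₁, IsClosed F := by
    rintro F (rfl | hF)
    exacts [isClosed_univ, hcl F hF]
  have hG₁fip : FIP G₁ := by
    intro t htsub htfin
    have h1 : t \ {Set.univ} ⊆ G := by
      rintro s ⟨hs, hs2⟩
      rcases htsub hs with rfl | h
      · exact absurd rfl hs2
      · exact h
    have h2 := hfip _ h1 (htfin.subset Set.diff_subset)
    obtain ⟨x, hx⟩ := h2
    refine ⟨x, fun s hs => ?_⟩
    rcases eq_or_ne s Set.univ with rfl | hne
    · trivial
    · exact hx s ⟨hs, hne⟩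
  set P : Set (Set (Set X)) := {H | G₁ ⊆ H ∧ (∀ F ∈ H, IsClosed F) ∧ FIP H} with hP
  have hchainP : ∀ c ⊆ P, IsChain (· ⊆ ·) c → c.Nonempty → ∃ ub ∈ P, ∀ s ∈ c, s ⊆ ub := by
    intro c hcP hchain hcne
    refine ⟨⋃₀ c, ⟨?_, ?_, ?_⟩, fun s hs => Set.subset_sUnion_of_mem hs⟩
    · obtain ⟨H, hH⟩ := hcne
      exact ((hcP hH).1).trans (Set.subset_sUnion_of_mem hH)
    · rintro F ⟨H, hHc, hFH⟩
      exact (hcP hHc).2.1 F hFH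
    · intro t htsub htfin
      obtain ⟨H, hHc, htH⟩ := chain_finite_subset hchain hcne htfin htsub
      exact (hcP hHc).2.2 t htH htfin
  obtain ⟨M, hG₁M, hMmax⟩ := zorn_subset_nonempty P hchainP G₁ ⟨subset_rfl, hG₁cl, hG₁fip⟩
  have hMP : M ∈ P := hMmax.1
  have hMcl := hMP.2.1
  have hMfip := hMP.2.2
  have hMuniv : Set.univ ∈ M := hG₁M (Set.mem_insert _ _)
  -- M is closed under binary intersections
  have hMinter : ∀ A ∈ M, ∀ B ∈ M, A ∩ B ∈ M := by
    intro A hA B hB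
    have hP' : insert (A ∩ B) M ∈ P := by
      refine ⟨hG₁M.trans (Set.subset_insert _ _), ?_, ?_⟩
      · rintro F (rfl | hF)
        exacts [(hMcl A hA).inter (hMcl B hB), hMcl F hF]
      · intro t htsub htfin
        set t' : Set (Set X) := insert A (insert B (t \ {A ∩ B})) with ht'
        have ht'sub : t' ⊆ M := by
          rintro s (rfl | rfl | ⟨hs, hs2⟩)
          exacts [hA, hB, by
            rcases htsub hs with rfl | h
            · exact absurd rfl hs2
            · exact h]
        have ht'fin : t'.Finite :=
          (((htfin.subset Set.diff_subset).insert B).insert A)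
        obtain ⟨x, hx⟩ := hMfip t' ht'sub ht'fin
        refine ⟨x, fun s hs => ?_⟩
        rcases eq_or_ne s (A ∩ B) with rfl | hne
        · exact ⟨hx A (Set.mem_insert _ _), hx B (Set.mem_insert_of_mem _ (Set.mem_insert _ _))⟩
        · exact hx s (Set.mem_insert_of_mem _ (Set.mem_insert_of_mem _ ⟨hs, hne⟩))
    have := hMmax.2 hP' (Set.subset_insert _ _)
    exact this (Set.mem_insert _ _)
  -- M contains finite nonempty intersections of its members
  have hMsInter : ∀ t ⊆ M, t.Finite → ⋂₀ t ∈ M := by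
    intro t htsub htfin
    refine Set.Finite.induction_on (motive := fun t _ => t ⊆ M → ⋂₀ t ∈ M) t htfin
      (fun _ => by simpa using hMuniv) ?_ htsub
    intro a s _ _ ih hsub
    rw [Set.sInter_insert]
    exact hMinter a (hsub (Set.mem_insert a s)) _ (ih fun x hx => hsub (Set.mem_insert_of_mem a hx))
  -- the maximality property for `mem_of_forall_inter`
  have hMsat : ∀ F : Set X, IsClosed F → (∀ A ∈ M, (F ∩ A).Nonempty) → F ∈ M := by
    intro F hF hmeet
    have hP' : insert F M ∈ P := by
      refine ⟨hG₁M.trans (Set.subset_insert _ _), ?_, ?_⟩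
      · rintro K (rfl | hK)
        exacts [hF, hMcl K hK]
      · intro t htsub htfin
        have ht' : t \ {F} ⊆ M := by
          rintro s ⟨hs, hs2⟩
          rcases htsub hs with rfl | h
          · exact absurd rfl hs2
          · exact h
        have hK : ⋂₀ (t \ {F}) ∈ M := hMsInter _ ht' (htfin.subset Set.diff_subset)
        obtain ⟨x, hx1, hx2⟩ := hmeet _ hK
        refine ⟨x, fun s hs => ?_⟩
        rcases eq_or_ne s F with rfl | hne
        · exact hx1
        · exact hx2 s ⟨hs, hne⟩
    have := hMmax.2 hP' (Set.subset_insert _ _)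
    exact this (Set.mem_insert _ _)
  have hMempty : ∅ ∉ M := by
    intro h
    obtain ⟨x, hx⟩ := hMfip {∅} (Set.singleton_subset_iff.mpr h) (Set.finite_singleton _)
    rw [Set.sInter_singleton] at hx
    exact hx
  exact ⟨⟨M, hMcl, hMempty, hMinter, hMsat⟩,
    fun F hF => hG₁M (Set.mem_insert_of_mem _ hF)⟩

end WallmanAux
namespace WallmanAux

variable {X : Type u} [TopologicalSpace X]

lemma exists_basic_subset {u : ClosedUltrafilter X} {O : Set (ClosedUltrafilter X)}
    (hO : IsOpen O) (hu : u ∈ O) :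
    ∃ U : Set X, IsOpen U ∧ u ∈ basicOpen U ∧ basicOpen U ⊆ O := by
  have hO' : TopologicalSpace.GenerateOpen
      {S | ∃ U : Set X, IsOpen U ∧ S = {v : ClosedUltrafilter X | ∃ F ∈ v.sets, F ⊆ U}} O := hO
  clear hO
  induction hO' with
  | basic S hS =>
    obtain ⟨U, hU, rfl⟩ := hS
    exact ⟨U, hU, hu, subset_rfl⟩
  | univ =>
    exact ⟨Set.univ, isOpen_univ, ⟨Set.univ, univ_mem u, subset_rfl⟩, Set.subset_univ _⟩
  | inter s t _ _ ihs iht =>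
    obtain ⟨U, hU, ⟨F, hF, hFU⟩, hsubU⟩ := ihs hu.1
    obtain ⟨V, hV, ⟨G, hG, hGV⟩, hsubV⟩ := iht hu.2
    refine ⟨U ∩ V, hU.inter hV, ⟨F ∩ G, u.inter_mem F hF G hG,
      fun x hx => ⟨hFU hx.1, hGV hx.2⟩⟩, fun v ⟨H, hH, hHUV⟩ => ?_⟩
    exact ⟨hsubU ⟨H, hH, fun x hx => (hHUV hx).1⟩, hsubV ⟨H, hH, fun x hx => (hHUV hx).2⟩⟩
  | sUnion S _ ih =>
    obtain ⟨s, hsS, hus⟩ := hu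
    obtain ⟨U, hU, humem, hsub⟩ := ih s hsS hus
    exact ⟨U, hU, humem, hsub.trans (Set.subset_sUnion_of_mem hsS)⟩

variable [T1Space X]

lemma mem_sets_wallmanMap {x : X} {F : Set X} (hF : IsClosed F) (hx : x ∈ F) :
    F ∈ (wallmanMap X x).sets := ⟨hF, hx⟩

lemma closure_image_wallmanMap (C : Set X) :
    closure (wallmanMap X '' C) = {u : ClosedUltrafilter X | closure C ∈ u.sets} := by
  apply Set.Subset.antisymm
  · apply closure_minimal
    · rintro _ ⟨x, hx, rfl⟩
      exact mem_sets_wallmanMap isClosed_closure (subset_closure hx)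
    · exact isClosed_star isClosed_closure
  · intro u hu
    rw [mem_closure_iff]
    intro O hO huO
    obtain ⟨U, hU, ⟨F, hF, hFU⟩, hsub⟩ := exists_basic_subset hO huO
    obtain ⟨y, hyF, hyC⟩ := nonempty_of_mem u (u.inter_mem F hF _ hu)
    have hUC : (U ∩ C).Nonempty := by
      rw [mem_closure_iff] at hyC
      exact hyC U hU (hFU hyF)
    obtain ⟨x, hxU, hxC⟩ := hUC
    exact ⟨wallmanMap X x,
      hsub ⟨{x}, mem_sets_wallmanMap isClosed_singleton rfl, Set.singleton_subset_iff.mpr hxU⟩,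
      ⟨x, hxC, rfl⟩⟩

lemma mem_wallmanKappa_iff {κ : Cardinal.{u}} {u : ClosedUltrafilter X} :
    u ∈ WallmanKappa κ X ↔ ∃ A ∈ u.sets, A ∈ FamilyKappa κ X := by
  simp only [WallmanKappa, Set.mem_iUnion, Set.mem_setOf_eq, closure_image_wallmanMap,
    exists_prop]
  constructor
  · rintro ⟨C, hC, hmem⟩
    exact ⟨closure C, hmem, isClosed_closure, C, hC, subset_rfl⟩
  · rintro ⟨A, hA, _, C, hC, hAC⟩
    exact ⟨C, hC, superset_mem u hA isClosed_closure hAC⟩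

lemma continuous_wallmanMap : Continuous (wallmanMap X) := by
  refine continuous_generateFrom_iff.mpr ?_
  rintro S ⟨U, hU, rfl⟩
  have heq : wallmanMap X ⁻¹' {v : ClosedUltrafilter X | ∃ F ∈ v.sets, F ⊆ U} = U := by
    ext x
    constructor
    · rintro ⟨F, hF, hFU⟩
      exact hFU hF.2
    · intro hx
      exact ⟨{x}, mem_sets_wallmanMap isClosed_singleton rfl, Set.singleton_subset_iff.mpr hx⟩
  rw [heq]
  exact hU

lemma wallmanMap_mem {κ : Cardinal.{u}} (hκ : ℵ₀ ≤ κ) (x : X) :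
    wallmanMap X x ∈ WallmanKappa κ X :=
  mem_wallmanKappa_iff.mpr ⟨{x}, mem_sets_wallmanMap isClosed_singleton rfl,
    isClosed_singleton, {x}, by simpa using (Cardinal.one_le_aleph0.trans hκ), subset_closure⟩

end WallmanAux
namespace WallmanAux

variable {X : Type u} [TopologicalSpace X]

lemma isCompact_star {A : Set X} (hA : IsClosed A) :
    IsCompact {u : ClosedUltrafilter X | A ∈ u.sets} := by
  classical
  set S := {u : ClosedUltrafilter X | A ∈ u.sets} with hSdef
  refine isCompact_of_finite_subcover fun {ι} O hO hcover => ?_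
  by_contra hno
  push_neg at hno
  -- choose basic refinements
  have hbasic : ∀ v : S, ∃ U : Set X, IsOpen U ∧ (v : ClosedUltrafilter X) ∈ basicOpen U ∧
      ∃ i : ι, basicOpen U ⊆ O i := by
    intro v
    obtain ⟨i, hi⟩ := Set.mem_iUnion.mp (hcover v.2)
    obtain ⟨U, hU, hvU, hsub⟩ := exists_basic_subset (hO i) hi
    exact ⟨U, hU, hvU, i, hsub⟩
  choose U hUopen hUmem hUsub using hbasic
  choose idx hidx using hUsub
  -- the family of closed sets
  set f : S → Set X := fun v => (U v)ᶜ with hf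
  set G : Set (Set X) := insert A (Set.range f) with hG
  have hGcl : ∀ F ∈ G, IsClosed F := by
    rintro F (rfl | ⟨v, rfl⟩)
    exacts [hA, (hUopen v).isClosed_compl]
  have hGfip : FIP G := by
    intro t htsub htfin
    by_contra hemp
    rw [Set.not_nonempty_iff_eq_empty] at hemp
    have ht' : t \ {A} ⊆ Set.range f := by
      rintro s ⟨hs, hs2⟩
      rcases htsub hs with rfl | h
      · exact absurd rfl hs2
      · exact h
    have hsec : ∀ s : ↥(t \ {A}), ∃ v : S, f v = (s : Set X) := fun s => ht' s.2
    choose sec hsec' using hsec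
    set s₀ : Set S := Set.range sec with hs₀
    have hs₀fin : s₀.Finite := by
      have : (t \ {A}).Finite := htfin.subset Set.diff_subset
      have : Finite ↥(t \ {A}) := this
      exact Set.finite_range _
    -- S is covered by the corresponding basic opens
    have hcov : S ⊆ ⋃ v ∈ s₀, O (idx v) := by
      intro w hw
      by_contra hwnot
      have hwnotb : ∀ v ∈ s₀, w ∉ basicOpen (U v) := fun v hv hb =>
        hwnot (Set.mem_iUnion₂.mpr ⟨v, hv, hidx v hb⟩)
      set D : Set (Set X) := insert A (f '' s₀) with hD
      have hDsub : D ⊆ w.sets := by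
        rintro F (rfl | ⟨v, hv, rfl⟩)
        · exact hw
        · exact (compl_mem_iff w (hUopen v)).mpr (hwnotb v hv)
      have hDfin : D.Finite := ((hs₀fin.image f).insert A)
      have hDmem : ⋂₀ D ∈ w.sets := sInter_mem w hDfin hDsub
      have hDsupset : ⋂₀ D ⊆ ⋂₀ t := by
        intro x hx s hs
        rcases eq_or_ne s A with rfl | hne
        · exact hx _ (Set.mem_insert _ _)
        · have hs' : s ∈ t \ {A} := ⟨hs, hne⟩
          have heq : s = f (sec ⟨s, hs'⟩) := (hsec' ⟨s, hs'⟩).symm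
          rw [heq]
          exact hx _ (Set.mem_insert_of_mem _ ⟨sec ⟨s, hs'⟩, ⟨⟨s, hs'⟩, rfl⟩, rfl⟩)
      have hDempty : ⋂₀ D = ∅ := Set.subset_empty_iff.mp (hemp ▸ hDsupset)
      rw [hDempty] at hDmem
      exact w.empty_not_mem hDmem
    -- turn into a finite subcover, contradiction
    set T : Finset ι := hs₀fin.toFinset.image idx with hT
    refine hno T (fun w hw => ?_)
    obtain ⟨v, hv, hwv⟩ := Set.mem_iUnion₂.mp (hcov hw)
    exact Set.mem_iUnion₂.mpr ⟨idx v, Finset.mem_image_of_mem idx (hs₀fin.mem_toFinset.mpr hv),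
      hwv⟩
  obtain ⟨u, hGu⟩ := exists_closedUltrafilter G hGcl hGfip
  have huS : u ∈ S := hGu (Set.mem_insert _ _)
  set v₀ : S := ⟨u, huS⟩ with hv₀
  obtain ⟨F, hF, hFU⟩ := hUmem v₀
  have hcomp : (U v₀)ᶜ ∈ u.sets := hGu (Set.mem_insert_of_mem _ ⟨v₀, rfl⟩)
  obtain ⟨x, hx1, hx2⟩ := nonempty_of_mem u (u.inter_mem F hF _ hcomp)
  exact hx2 (hFU hx1)

end WallmanAux

open WallmanAux

/-- For an infinite cardinal `κ` and a `T₁`-space `X`, the Wallman `κ`-bounded extension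
`W_κ̄X` is regular if and only if `X` is totally `κ̄`-normal. -/
theorem regular_wallmanKappa_iff_totallyFNormal {X : Type u} [TopologicalSpace X] [T1Space X]
    (κ : Cardinal.{u}) (hκ : ℵ₀ ≤ κ) :
    RegularSpace (WallmanKappa κ X) ↔ TotallyFNormal X (FamilyKappa κ X) := by
  constructor
  · -- regular → totally normal
    intro hReg A hAF B hB hAB
    obtain ⟨hAcl, C, hC, hAC⟩ := hAF
    set Wk := WallmanKappa κ X with hWk
    have hSW : {u : ClosedUltrafilter X | A ∈ u.sets} ⊆ Wk := fun u hu =>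
      mem_wallmanKappa_iff.mpr ⟨A, hu, hAcl, C, hC, hAC⟩
    set S' : Set ↥Wk := Subtype.val ⁻¹' {u : ClosedUltrafilter X | A ∈ u.sets} with hS'
    have hS'cpt : IsCompact S' := by
      rw [Topology.IsEmbedding.subtypeVal.isCompact_iff]
      have himg : Subtype.val '' S' = {u : ClosedUltrafilter X | A ∈ u.sets} := by
        rw [hS', Set.image_preimage_eq_inter_range, Subtype.range_val]
        exact Set.inter_eq_left.mpr hSW
      rw [himg]
      exact isCompact_star hAcl
    set Bs : Set ↥Wk := Subtype.val ⁻¹' {u : ClosedUltrafilter X | B ∈ u.sets} with hBs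
    have hBscl : IsClosed Bs := (isClosed_star hB).preimage continuous_subtype_val
    have hsep : ∀ w : ↥S', ∃ UU VV : Set ↥Wk, IsOpen UU ∧ IsOpen VV ∧
        (w : ↥Wk) ∈ UU ∧ Bs ⊆ VV ∧ Disjoint UU VV := by
      intro w
      have hnot : (w : ↥Wk) ∉ Bs := by
        intro hmem
        have hABw : A ∩ B ∈ (w.1.1 : ClosedUltrafilter X).sets :=
          (w.1.1).inter_mem A w.2 B hmem
        rw [Set.disjoint_iff_inter_eq_empty.mp hAB] at hABw
        exact (w.1.1).empty_not_mem hABw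
      have hdisj : Disjoint (𝓝 (w : ↥Wk)) (𝓝ˢ Bs) :=
        disjoint_nhds_nhdsSet.mpr (by rwa [hBscl.closure_eq])
      obtain ⟨UU, ⟨huUU, hUUopen⟩, VV, ⟨hVVopen, hBsVV⟩, hUV⟩ :=
        ((nhds_basis_opens _).disjoint_iff (hasBasis_nhdsSet _)).mp hdisj
      exact ⟨UU, VV, hUUopen, hVVopen, huUU, hBsVV, hUV⟩
    choose UU VV hUUopen hVVopen hmemUU hBsVV hdisjUV using hsep
    have hcov : S' ⊆ ⋃ w : ↥S', UU w := fun w hw => Set.mem_iUnion.mpr ⟨⟨w, hw⟩, hmemUU ⟨w, hw⟩⟩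
    obtain ⟨t, ht⟩ := hS'cpt.elim_finite_subcover UU hUUopen hcov
    set Uw : Set ↥Wk := ⋃ i ∈ t, UU i with hUw
    set Vw : Set ↥Wk := ⋂ i ∈ t, VV i with hVw
    have hUwopen : IsOpen Uw := isOpen_biUnion fun i _ => hUUopen i
    have hVwopen : IsOpen Vw := isOpen_biInter_finset fun i _ => hVVopen i
    have hBsVw : Bs ⊆ Vw := fun x hx => Set.mem_iInter₂.mpr fun i _ => hBsVV i hx
    have hUVw : Disjoint Uw Vw := by
      rw [Set.disjoint_left]
      intro x hx hx2
      obtain ⟨i, hi, hxU⟩ := Set.mem_iUnion₂.mp hx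
      exact Set.disjoint_left.mp (hdisjUV i) hxU (Set.mem_iInter₂.mp hx2 i hi)
    set φ : X → ↥Wk := fun x => ⟨wallmanMap X x, wallmanMap_mem hκ x⟩ with hφ
    have hφcont : Continuous φ := continuous_wallmanMap.subtype_mk _
    refine ⟨φ ⁻¹' Uw, φ ⁻¹' Vw, hUwopen.preimage hφcont, hVwopen.preimage hφcont, ?_, ?_,
      hUVw.preimage φ⟩
    · intro x hx
      have hφx : φ x ∈ S' := mem_sets_wallmanMap hAcl hx
      exact ht hφx
    · intro x hx
      exact hBsVw (mem_sets_wallmanMap hB hx)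
  · -- totally normal → regular
    intro hTN
    refine RegularSpace.of_exists_mem_nhds_isClosed_subset ?_
    rintro ⟨u, hu⟩ s hs
    rw [nhds_subtype_eq_comap] at hs
    obtain ⟨t, ht, hts⟩ := Filter.mem_comap.mp hs
    obtain ⟨O, hOt, hO, huO⟩ := mem_nhds_iff.mp ht
    obtain ⟨Uo, hUo, ⟨F, hFu, hFU⟩, hbsub⟩ := exists_basic_subset hO huO
    obtain ⟨A₀, hA₀u, hA₀cl, C, hC, hA₀C⟩ := mem_wallmanKappa_iff.mp hu
    have hAu : F ∩ A₀ ∈ u.sets := u.inter_mem F hFu A₀ hA₀u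
    have hAF : F ∩ A₀ ∈ FamilyKappa κ X :=
      ⟨(u.isClosed_of_mem F hFu).inter hA₀cl, C, hC, (Set.inter_subset_right).trans hA₀C⟩
    have hdisj : Disjoint (F ∩ A₀) Uoᶜ :=
      Set.disjoint_left.mpr fun x hx hxc => hxc (hFU hx.1)
    obtain ⟨V, V', hV, hV', hAV, hUV', hVV'⟩ := hTN _ hAF Uoᶜ hUo.isClosed_compl hdisj
    have hVsub : basicOpen V ⊆ (basicOpen V')ᶜ := by
      rintro w ⟨H, hHw, hHV⟩ ⟨G2, hGw, hGV'⟩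
      obtain ⟨x, hx1, hx2⟩ := nonempty_of_mem w (w.inter_mem H hHw G2 hGw)
      exact Set.disjoint_left.mp hVV' (hHV hx1) (hGV' hx2)
    refine ⟨Subtype.val ⁻¹' (basicOpen V')ᶜ, ?_, ?_, ?_⟩
    · rw [mem_nhds_iff]
      exact ⟨Subtype.val ⁻¹' basicOpen V, Set.preimage_mono hVsub,
        (isOpen_basicOpen hV).preimage continuous_subtype_val, ⟨F ∩ A₀, hAu, hAV⟩⟩
    · exact ((isOpen_basicOpen hV').isClosed_compl).preimage continuous_subtype_val
    · rintro ⟨w, hw⟩ hwmem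
      have hV'c : V'ᶜ ∈ w.sets := (compl_mem_iff w hV').mpr hwmem
      obtain ⟨A₁, hA₁w, _⟩ := mem_wallmanKappa_iff.mp hw
      have hG : V'ᶜ ∩ A₁ ∈ w.sets := w.inter_mem _ hV'c A₁ hA₁w
      have hGU : V'ᶜ ∩ A₁ ⊆ Uo := fun x hx => by_contra fun h => hx.1 (hUV' h)
      exact hts (hOt (hbsub ⟨V'ᶜ ∩ A₁, hG, hGU⟩))
end

section
/- Let κ be an infinite cardinal and let X be a T1 topological space that is κ̄-normal. Then X is homeomorphic to a subspace of a Hausdorff κ-bounded topological space; that is, there exists a Hausdorff κ-bounded topological space Y and a topological embedding of X into Y. -/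
universe u

open Cardinal Set Topology

section CF

variable {X : Type u} [TopologicalSpace X]

/-- A filter of closed sets. -/
structure IsCF (F : Set (Set X)) : Prop where
  closed : ∀ A ∈ F, IsClosed A
  empty_not_mem : ∅ ∉ F
  univ_mem : Set.univ ∈ F
  inter_mem : ∀ A ∈ F, ∀ B ∈ F, A ∩ B ∈ F
  superset_mem : ∀ A ∈ F, ∀ B : Set X, IsClosed B → A ⊆ B → B ∈ F

/-- A maximal filter of closed sets. -/
def IsCUF (F : Set (Set X)) : Prop :=
  IsCF F ∧ ∀ B : Set X, IsClosed B → (∀ A ∈ F, (A ∩ B).Nonempty) → B ∈ F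

theorem IsCUF.exists_disjoint {F : Set (Set X)} (hF : IsCUF F) {B : Set X} (hB : IsClosed B)
    (hBF : B ∉ F) : ∃ A ∈ F, A ∩ B = ∅ := by
  by_contra hc
  push_neg at hc
  exact hBF (hF.2 B hB fun A hA => hc A hA)

theorem IsCUF.not_mem_of_disjoint {F : Set (Set X)} (hF : IsCUF F) {A B : Set X} (hA : A ∈ F)
    (hd : A ∩ B = ∅) : B ∉ F := fun hB =>
  hF.1.empty_not_mem (hd ▸ hF.1.inter_mem A hA B hB)

theorem IsCUF.mem_of_union {F : Set (Set X)} (hF : IsCUF F) {A B : Set X} (hA : IsClosed A)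
    (hB : IsClosed B) (hm : A ∪ B ∈ F) : A ∈ F ∨ B ∈ F := by
  by_contra hc
  push_neg at hc
  obtain ⟨A', hA', hA'd⟩ := hF.exists_disjoint hA hc.1
  obtain ⟨B', hB', hB'd⟩ := hF.exists_disjoint hB hc.2
  have h1 : A' ∩ B' ∩ (A ∪ B) ∈ F := hF.1.inter_mem _ (hF.1.inter_mem _ hA' _ hB') _ hm
  have h2 : A' ∩ B' ∩ (A ∪ B) = ∅ := by
    rw [eq_empty_iff_forall_notMem] at hA'd hB'd ⊢
    rintro x ⟨⟨hx1, hx2⟩, hx3 | hx3⟩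
    · exact hA'd x ⟨hx1, hx3⟩
    · exact hB'd x ⟨hx2, hx3⟩
  exact hF.1.empty_not_mem (h2 ▸ h1)

/-- Every closed filter extends to a maximal one (Zorn). -/
theorem IsCF.exists_cuf {F : Set (Set X)} (hF : IsCF F) : ∃ G, IsCUF G ∧ F ⊆ G := by
  obtain ⟨M, hFM, hMmem, hMmax⟩ :
      ∃ M, F ⊆ M ∧ (IsCF M ∧ F ⊆ M) ∧ ∀ G, (IsCF G ∧ F ⊆ G) → M ⊆ G → G ⊆ M := by
    obtain ⟨M, hFM, hM⟩ := zorn_subset_nonempty {G : Set (Set X) | IsCF G ∧ F ⊆ G}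
      (fun c hc hchain hne => by
        obtain ⟨G₀, hG₀⟩ := hne
        refine ⟨⋃₀ c, ⟨⟨?_, ?_, ?_, ?_, ?_⟩, ?_⟩, fun s hs => subset_sUnion_of_mem hs⟩
        · rintro A ⟨G, hG, hA⟩
          exact (hc hG).1.closed A hA
        · rintro ⟨G, hG, hA⟩
          exact (hc hG).1.empty_not_mem hA
        · exact ⟨G₀, hG₀, (hc hG₀).1.univ_mem⟩
        · rintro A ⟨G₁, hG₁, hA⟩ B ⟨G₂, hG₂, hB⟩
          rcases hchain.total hG₁ hG₂ with hsub | hsub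
          · exact ⟨G₂, hG₂, (hc hG₂).1.inter_mem A (hsub hA) B hB⟩
          · exact ⟨G₁, hG₁, (hc hG₁).1.inter_mem A hA B (hsub hB)⟩
        · rintro A ⟨G₁, hG₁, hA⟩ B hBc hAB
          exact ⟨G₁, hG₁, (hc hG₁).1.superset_mem A hA B hBc hAB⟩
        · exact (hc hG₀).2.trans (subset_sUnion_of_mem hG₀))
      F ⟨hF, subset_rfl⟩
    exact ⟨M, hFM, hM.1, fun G hG hMG => hM.2 hG hMG⟩
  refine ⟨M, ⟨hMmem.1, ?_⟩, hFM⟩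
  intro B hB hmeet
  have hM' : IsCF {C : Set X | IsClosed C ∧ ∃ A ∈ M, A ∩ B ⊆ C} := by
    refine ⟨fun A hA => hA.1, ?_, ⟨isClosed_univ, univ, hMmem.1.univ_mem, subset_univ _⟩, ?_, ?_⟩
    · rintro ⟨-, A, hA, hsub⟩
      exact (hmeet A hA).ne_empty (subset_empty_iff.1 hsub)
    · rintro A₁ ⟨h₁, A, hA, hsubA⟩ A₂ ⟨h₂, A', hA', hsubA'⟩
      exact ⟨h₁.inter h₂, A ∩ A', hMmem.1.inter_mem A hA A' hA',
        fun x ⟨⟨hx1, hx2⟩, hx3⟩ => ⟨hsubA ⟨hx1, hx3⟩, hsubA' ⟨hx2, hx3⟩⟩⟩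
    · rintro A₁ ⟨h₁, A, hA, hsubA⟩ B₂ hB₂ hsub
      exact ⟨hB₂, A, hA, hsubA.trans hsub⟩
  have hMsub : M ⊆ {C : Set X | IsClosed C ∧ ∃ A ∈ M, A ∩ B ⊆ C} :=
    fun A hA => ⟨hMmem.1.closed A hA, A, hA, inter_subset_left⟩
  exact hMmax _ ⟨hM', hFM.trans hMsub⟩ hMsub ⟨hB, univ, hMmem.1.univ_mem, by simp⟩

end CF

section WSpace

variable (κ : Cardinal.{u}) (X : Type u) [TopologicalSpace X]

/-- The Wallman-type extension: maximal closed filters containing a member of `𝓕_κ(X)`. -/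
def WSpace : Type u := {F : Set (Set X) // IsCUF F ∧ ∃ A ∈ F, A ∈ FamilyKappa κ X}

/-- Basic open sets of the extension. -/
def WO (U : Set X) : Set (WSpace κ X) := {F | Uᶜ ∉ F.1}

instance : TopologicalSpace (WSpace κ X) :=
  TopologicalSpace.generateFrom {s | ∃ U : Set X, IsOpen U ∧ s = WO κ X U}

theorem WO_isOpen {U : Set X} (hU : IsOpen U) : IsOpen (WO κ X U) :=
  TopologicalSpace.isOpen_generateFrom_of_mem ⟨U, hU, rfl⟩

theorem Bhat_isClosed {B : Set X} (hB : IsClosed B) :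
    IsClosed {H : WSpace κ X | B ∈ H.1} := by
  have : {H : WSpace κ X | B ∈ H.1}ᶜ = WO κ X Bᶜ := by
    ext H; simp [WO, compl_compl]
  rw [← isOpen_compl_iff, this]
  exact WO_isOpen κ X hB.isOpen_compl

variable {κ X}

theorem mem_WO_of_subset {F : WSpace κ X} {A U : Set X} (hA : A ∈ F.1) (hAU : A ⊆ U) :
    F ∈ WO κ X U :=
  F.2.1.not_mem_of_disjoint hA (by rw [eq_empty_iff_forall_notMem]; exact fun x ⟨h1, h2⟩ => h2 (hAU h1))

theorem WSpace_t2 (h : FNormal X (FamilyKappa κ X)) : T2Space (WSpace κ X) := by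
  constructor
  intro F G hne
  -- find disjoint members A ∈ F.1, B ∈ G.1
  obtain ⟨A, hAF, B, hBG, hABd⟩ : ∃ A ∈ F.1, ∃ B ∈ G.1, A ∩ B = ∅ := by
    have h1 : F.1 ≠ G.1 := fun hc => hne (Subtype.ext hc)
    have h2 : ¬ F.1 ⊆ G.1 := by
      intro hc
      refine h1 (Set.Subset.antisymm hc fun B hBG => ?_)
      refine F.2.1.2 B (G.2.1.1.closed B hBG) fun A hAF => ?_
      have hm := G.2.1.1.inter_mem A (hc hAF) B hBG
      rcases (A ∩ B).eq_empty_or_nonempty with he | hne'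
      · exact absurd (he ▸ hm) G.2.1.1.empty_not_mem
      · exact hne'
    obtain ⟨A, hAF, hAG⟩ := Set.not_subset.1 h2
    obtain ⟨B, hBG, hBd⟩ := G.2.1.exists_disjoint (F.2.1.1.closed A hAF) hAG
    exact ⟨A, hAF, B, hBG, by rw [← hBd]; exact inter_comm _ _⟩
  obtain ⟨AF, hAFmem, hAFk⟩ := F.2.2
  obtain ⟨BG, hBGmem, hBGk⟩ := G.2.2
  set A' := A ∩ AF with hA'
  set B' := B ∩ BG with hB'
  have hA'F : A' ∈ F.1 := F.2.1.1.inter_mem A hAF AF hAFmem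
  have hB'G : B' ∈ G.1 := G.2.1.1.inter_mem B hBG BG hBGmem
  have hA'k : A' ∈ FamilyKappa κ X := by
    obtain ⟨hcl, C, hC, hsub⟩ := hAFk
    exact ⟨(F.2.1.1.closed A hAF).inter hcl, C, hC, inter_subset_right.trans hsub⟩
  have hB'k : B' ∈ FamilyKappa κ X := by
    obtain ⟨hcl, C, hC, hsub⟩ := hBGk
    exact ⟨(G.2.1.1.closed B hBG).inter hcl, C, hC, inter_subset_right.trans hsub⟩
  have hdisj : Disjoint A' B' := by
    rw [Set.disjoint_iff_inter_eq_empty, ← subset_empty_iff, ← hABd]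
    exact inter_subset_inter inter_subset_left inter_subset_left
  obtain ⟨U, V, hU, hV, hAU, hBV, hUV⟩ := h A' hA'k B' hB'k hdisj
  refine ⟨WO κ X U, WO κ X V, WO_isOpen κ X hU, WO_isOpen κ X hV,
    mem_WO_of_subset hA'F hAU, mem_WO_of_subset hB'G hBV, ?_⟩
  rw [Set.disjoint_iff_inter_eq_empty, eq_empty_iff_forall_notMem]
  rintro H ⟨hHU, hHV⟩
  have huniv : Uᶜ ∪ Vᶜ = Set.univ := by
    rw [← compl_inter, Set.disjoint_iff_inter_eq_empty.1 hUV, compl_empty]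
  rcases H.2.1.mem_of_union hU.isClosed_compl hV.isClosed_compl
      (huniv ▸ H.2.1.1.univ_mem) with hc | hc
  · exact hHU hc
  · exact hHV hc

theorem Bhat_isCompact {D : Set X} (hD : D ∈ FamilyKappa κ X) :
    IsCompact {H : WSpace κ X | D ∈ H.1} := by
  rw [isCompact_iff_ultrafilter_le_nhds]
  intro 𝒰 h𝒰
  rw [Filter.le_principal_iff] at h𝒰
  set H0 : Set (Set X) := {B | IsClosed B ∧ {G : WSpace κ X | B ∈ G.1} ∈ 𝒰} with hH0def
  have hH0 : IsCF H0 := by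
    refine ⟨fun A hA => hA.1, ?_, ⟨isClosed_univ, ?_⟩, ?_, ?_⟩
    · rintro ⟨-, hc⟩
      have : {G : WSpace κ X | (∅ : Set X) ∈ G.1} = ∅ := by
        rw [eq_empty_iff_forall_notMem]
        exact fun G hG => G.2.1.1.empty_not_mem hG
      exact Filter.empty_notMem (𝒰 : Filter (WSpace κ X)) (this ▸ hc)
    · have : {G : WSpace κ X | (Set.univ : Set X) ∈ G.1} = Set.univ := by
        rw [eq_univ_iff_forall]; exact fun G => G.2.1.1.univ_mem
      rw [this]; exact Filter.univ_mem
    · rintro A ⟨hAc, hAm⟩ B ⟨hBc, hBm⟩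
      refine ⟨hAc.inter hBc, ?_⟩
      have : {G : WSpace κ X | A ∈ G.1} ∩ {G : WSpace κ X | B ∈ G.1} ⊆
          {G : WSpace κ X | A ∩ B ∈ G.1} :=
        fun G ⟨h1, h2⟩ => G.2.1.1.inter_mem A h1 B h2
      exact Filter.mem_of_superset (Filter.inter_mem hAm hBm) this
    · rintro A ⟨hAc, hAm⟩ B hBc hAB
      exact ⟨hBc, Filter.mem_of_superset hAm fun G hG => G.2.1.1.superset_mem A hG B hBc hAB⟩
  have hDH0 : D ∈ H0 := ⟨hD.1, h𝒰⟩
  obtain ⟨M, hM, hH0M⟩ := hH0.exists_cuf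
  set y : WSpace κ X := ⟨M, hM, D, hH0M hDH0, hD⟩ with hy
  refine ⟨y, hH0M hDH0, ?_⟩
  have hn : 𝓝 y = ⨅ s ∈ {s | y ∈ s ∧ s ∈ {s | ∃ U : Set X, IsOpen U ∧ s = WO κ X U}},
      Filter.principal s := TopologicalSpace.nhds_generateFrom
  rw [hn]
  refine le_iInf₂ fun s hs => ?_
  rw [Filter.le_principal_iff]
  obtain ⟨hys, U, hU, rfl⟩ := hs
  have h1 : Uᶜ ∉ H0 := fun hc => hys (hH0M hc)
  have h2 : {G : WSpace κ X | Uᶜ ∈ G.1} ∉ 𝒰 := fun hc => h1 ⟨hU.isClosed_compl, hc⟩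
  have h3 := (Ultrafilter.compl_mem_iff_notMem.2 h2)
  have h4 : {G : WSpace κ X | Uᶜ ∈ G.1}ᶜ = WO κ X U := by
    ext G; simp [WO]
  rwa [h4] at h3

theorem WSpace_kappaBounded (hκ : ℵ₀ ≤ κ) : KappaBounded κ (WSpace κ X) := by
  intro S hS
  have hch : ∀ F : WSpace κ X, ∃ C A : Set X, #C ≤ κ ∧ A ∈ F.1 ∧ A ⊆ closure C := by
    intro F
    obtain ⟨A, hAF, -, C, hC, hsub⟩ := F.2.2
    exact ⟨C, A, hC, hAF, hsub⟩
  choose C A hC hAF hAsub using hch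
  set D := closure (⋃ F : S, C F.1) with hD
  have hcard : #(⋃ F : S, C F.1) ≤ κ := by
    calc #(⋃ F : S, C F.1) ≤ #S * ⨆ F : S, #(C F.1) := mk_iUnion_le _
    _ ≤ κ * κ := mul_le_mul' hS (ciSup_le' fun F => hC F.1)
    _ = κ := mul_eq_self hκ
  have hDk : D ∈ FamilyKappa κ X := ⟨isClosed_closure, ⋃ F : S, C F.1, hcard, subset_rfl⟩
  have hSsub : S ⊆ {H : WSpace κ X | D ∈ H.1} := by
    intro F hF
    refine F.2.1.1.superset_mem (A F) (hAF F) D isClosed_closure ?_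
    exact (hAsub F).trans (closure_mono (subset_iUnion (fun G : S => C G.1) ⟨F, hF⟩))
  exact (Bhat_isCompact hDk).of_isClosed_subset isClosed_closure
    (closure_minimal hSsub (Bhat_isClosed κ X isClosed_closure))

end WSpace


section Emb

variable {κ : Cardinal.{u}} {X : Type u} [TopologicalSpace X] [T1Space X]

/-- The principal closed ultrafilter at a point. -/
def pcuf (x : X) : Set (Set X) := {A | IsClosed A ∧ x ∈ A}

theorem pcuf_isCUF (x : X) : IsCUF (pcuf x) := by
  refine ⟨⟨fun A hA => hA.1, fun hc => hc.2, ⟨isClosed_univ, mem_univ x⟩,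
    fun A hA B hB => ⟨hA.1.inter hB.1, hA.2, hB.2⟩,
    fun A hA B hBc hAB => ⟨hBc, hAB hA.2⟩⟩, ?_⟩
  intro B hB hmeet
  obtain ⟨z, hz1, hz2⟩ := hmeet {x} ⟨isClosed_singleton, mem_singleton x⟩
  rw [mem_singleton_iff] at hz1
  exact ⟨hB, hz1 ▸ hz2⟩

/-- The canonical embedding of `X` into its extension. -/
def wemb (hκ1 : 1 ≤ κ) (x : X) : WSpace κ X :=
  ⟨pcuf x, pcuf_isCUF x, {x}, ⟨isClosed_singleton, mem_singleton x⟩,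
    isClosed_singleton, {x}, by rw [Cardinal.mk_singleton]; exact hκ1, subset_closure⟩

theorem wemb_preimage (hκ1 : 1 ≤ κ) {U : Set X} (hU : IsOpen U) :
    wemb hκ1 ⁻¹' WO κ X U = U := by
  ext x
  simp only [mem_preimage, WO, wemb, pcuf, mem_setOf_eq]
  constructor
  · intro hx
    by_contra hxU
    exact hx ⟨hU.isClosed_compl, hxU⟩
  · rintro hxU ⟨-, hc⟩
    exact hc hxU

theorem wemb_isEmbedding (hκ1 : 1 ≤ κ) : Topology.IsEmbedding (wemb (κ := κ) (X := X) hκ1) := by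
  refine ⟨⟨le_antisymm ?_ ?_⟩, ?_⟩
  · refine continuous_iff_le_induced.1 (continuous_generateFrom_iff.2 ?_)
    rintro s ⟨U, hU, rfl⟩
    rw [wemb_preimage hκ1 hU]
    exact hU
  · rw [TopologicalSpace.le_def]
    intro U hU
    exact isOpen_induced_iff.2 ⟨WO κ X U, WO_isOpen κ X hU, wemb_preimage hκ1 hU⟩
  · intro x y hxy
    have h1 : pcuf x = pcuf y := congrArg Subtype.val hxy
    have h2 : ({x} : Set X) ∈ pcuf y := h1 ▸ ⟨isClosed_singleton, mem_singleton x⟩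
    exact (mem_singleton_iff.1 h2.2).symm

end Emb

/-- Every `κ̄`-normal `T₁`-space embeds into a Hausdorff `κ`-bounded space. -/
theorem embeds_into_t2_kappaBounded_of_fNormal {X : Type u} [TopologicalSpace X] [T1Space X]
    (κ : Cardinal.{u}) (hκ : ℵ₀ ≤ κ) (h : FNormal X (FamilyKappa κ X)) :
    ∃ (Y : Type u) (_ : TopologicalSpace Y), T2Space Y ∧ KappaBounded κ Y ∧
      ∃ f : X → Y, Topology.IsEmbedding f := by
  have hκ1 : (1 : Cardinal.{u}) ≤ κ := le_trans (le_of_lt Cardinal.one_lt_aleph0) hκ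
  exact ⟨WSpace κ X, inferInstance, WSpace_t2 h, WSpace_kappaBounded hκ, wemb hκ1,
    wemb_isEmbedding hκ1⟩
end

section
/- Let κ be an infinite cardinal and let X be a T1 topological space in which every closed subspace of density at most κ is Lindelöf. If X is κ̄-regular, then X is κ̄-normal. -/
universe u

open Cardinal Set Topology

lemma lindelof_sep {X : Type u} [TopologicalSpace X] {A B : Set X}
    (hA : IsLindelof A) (hB : IsLindelof B)
    (hAB : ∀ a ∈ A, ∃ V : Set X, IsOpen V ∧ a ∈ V ∧ closure V ∩ B = ∅)
    (hBA : ∀ b ∈ B, ∃ W : Set X, IsOpen W ∧ b ∈ W ∧ closure W ∩ A = ∅) :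
    ∃ U V : Set X, IsOpen U ∧ IsOpen V ∧ A ⊆ U ∧ B ⊆ V ∧ Disjoint U V := by
  rcases A.eq_empty_or_nonempty with rfl | hAne
  · exact ⟨∅, univ, isOpen_empty, isOpen_univ, Subset.rfl, subset_univ _,
      empty_disjoint _⟩
  rcases B.eq_empty_or_nonempty with rfl | hBne
  · exact ⟨univ, ∅, isOpen_univ, isOpen_empty, subset_univ _, Subset.rfl,
      (empty_disjoint _).symm⟩
  choose v hvo hvmem hvB using hAB
  choose w hwo hwmem hwA using hBA
  have hAι : Nonempty ↥A := hAne.to_subtype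
  have hBι : Nonempty ↥B := hBne.to_subtype
  obtain ⟨f, hf⟩ := hA.indexed_countable_subcover (fun a : ↥A => v a a.2)
    (fun a => hvo a a.2) (fun x hx => mem_iUnion.2 ⟨⟨x, hx⟩, hvmem x hx⟩)
  obtain ⟨g, hg⟩ := hB.indexed_countable_subcover (fun b : ↥B => w b b.2)
    (fun b => hwo b b.2) (fun x hx => mem_iUnion.2 ⟨⟨x, hx⟩, hwmem x hx⟩)
  set Vs : ℕ → Set X := fun n => v (f n) (f n).2 with hVs
  set Ws : ℕ → Set X := fun n => w (g n) (g n).2 with hWs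
  have hVsB : ∀ n, closure (Vs n) ∩ B = ∅ := fun n => hvB _ _
  have hWsA : ∀ n, closure (Ws n) ∩ A = ∅ := fun n => hwA _ _
  refine ⟨⋃ n, Vs n \ ⋃ m ∈ Finset.range (n + 1), closure (Ws m),
          ⋃ n, Ws n \ ⋃ m ∈ Finset.range (n + 1), closure (Vs m), ?_, ?_, ?_, ?_, ?_⟩
  · exact isOpen_iUnion fun n => (hvo _ _).sdiff
      (isClosed_biUnion_finset fun m _ => isClosed_closure)
  · exact isOpen_iUnion fun n => (hwo _ _).sdiff
      (isClosed_biUnion_finset fun m _ => isClosed_closure)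
  · intro a ha
    obtain ⟨n, hn⟩ := mem_iUnion.1 (hf ha)
    refine mem_iUnion.2 ⟨n, hn, ?_⟩
    simp only [mem_iUnion, not_exists]
    intro m _
    intro hmem
    exact (eq_empty_iff_forall_notMem.1 (hWsA m)) a ⟨hmem, ha⟩
  · intro b hb
    obtain ⟨n, hn⟩ := mem_iUnion.1 (hg hb)
    refine mem_iUnion.2 ⟨n, hn, ?_⟩
    simp only [mem_iUnion, not_exists]
    intro m _
    intro hmem
    exact (eq_empty_iff_forall_notMem.1 (hVsB m)) b ⟨hmem, hb⟩
  · rw [Set.disjoint_left]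
    rintro x hxU hxV
    obtain ⟨n, hxVn, hxnW⟩ := mem_iUnion.1 hxU
    obtain ⟨m, hxWm, hxmV⟩ := mem_iUnion.1 hxV
    simp only [mem_iUnion, not_exists, Finset.mem_range] at hxnW hxmV
    rcases le_total m n with h | h
    · exact hxnW m (by omega) (subset_closure hxWm)
    · exact hxmV n (by omega) (subset_closure hxVn)

/-- If `X` is a `T₁`-space in which every closed subspace of density at most `κ` is Lindelöf,
and `X` is `κ̄`-regular, then `X` is `κ̄`-normal. -/
theorem fNormal_of_fRegular_of_lindelof {X : Type u} [TopologicalSpace X] [T1Space X]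
    (κ : Cardinal.{u}) (hκ : ℵ₀ ≤ κ)
    (hLind : ∀ F : Set X, IsClosed F → (∃ D : Set X, D ⊆ F ∧ #D ≤ κ ∧ F ⊆ closure D) →
      IsLindelof F)
    (hreg : FRegular X (FamilyKappa κ X)) : FNormal X (FamilyKappa κ X) := by
  intro A hAF B hBF hdisj
  obtain ⟨hAc, CA, hCA, hACA⟩ := hAF
  obtain ⟨hBc, CB, hCB, hBCB⟩ := hBF
  have hLA : IsLindelof A :=
    (hLind (closure CA) isClosed_closure
      ⟨CA, subset_closure, hCA, Subset.rfl⟩).of_isClosed_subset hAc hACA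
  have hLB : IsLindelof B :=
    (hLind (closure CB) isClosed_closure
      ⟨CB, subset_closure, hCB, Subset.rfl⟩).of_isClosed_subset hBc hBCB
  have sep : ∀ (P Q : Set X), Q ∈ FamilyKappa κ X → Disjoint P Q →
      ∀ a ∈ P, ∃ V : Set X, IsOpen V ∧ a ∈ V ∧ closure V ∩ Q = ∅ := by
    intro P Q hQ hPQ a ha
    obtain ⟨U, V, hUo, hVo, hQU, haV, hUV⟩ :=
      hreg Q hQ a (fun haQ => Set.disjoint_left.1 hPQ ha haQ)
    refine ⟨V, hVo, haV, ?_⟩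
    have hclV : closure V ⊆ Uᶜ :=
      closure_minimal (Set.disjoint_right.1 hUV) hUo.isClosed_compl
    exact eq_empty_iff_forall_notMem.2 fun x ⟨hx1, hx2⟩ => hclV hx1 (hQU hx2)
  exact lindelof_sep hLA hLB (sep A B ⟨hBc, CB, hCB, hBCB⟩ hdisj)
    (sep B A ⟨hAc, CA, hCA, hACA⟩ hdisj.symm)
end

section
/- Let κ be an infinite cardinal and let X be a T1 topological space that is strongly κ̄-normal. Then X is homeomorphic to a subspace of a Urysohn κ-bounded topological space; that is, there exists a Urysohn κ-bounded topological space Y and a topological embedding of X into Y. -/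
universe u

open Cardinal Set Topology

namespace WallmanAux

variable {X : Type u} [TopologicalSpace X]

/-- A (proper) filter of closed sets. -/
def IsCF (G : Set (Set X)) : Prop :=
  (∀ A ∈ G, IsClosed A) ∧ Set.univ ∈ G ∧ ∅ ∉ G ∧
    (∀ A ∈ G, ∀ B ∈ G, A ∩ B ∈ G) ∧ ∀ A ∈ G, ∀ B : Set X, IsClosed B → A ⊆ B → B ∈ G

/-- A closed ultrafilter. -/
def IsCUF (G : Set (Set X)) : Prop :=
  IsCF G ∧ ∀ B : Set X, IsClosed B → (∀ A ∈ G, (A ∩ B).Nonempty) → B ∈ G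

theorem IsCUF.exists_disjoint_of_notMem {G : Set (Set X)} (hG : IsCUF G) {B : Set X}
    (hB : IsClosed B) (hBG : B ∉ G) : ∃ A ∈ G, A ∩ B = ∅ := by
  by_contra hc
  push_neg at hc
  exact hBG (hG.2 B hB fun A hA => hc A hA)

theorem IsCF.biInter_mem {G : Set (Set X)} (hG : IsCF G) {ι : Type*} (t : Finset ι)
    (f : ι → Set X) (hf : ∀ i ∈ t, f i ∈ G) : (⋂ i ∈ t, f i) ∈ G := by
  classical
  induction t using Finset.induction_on with
  | empty => simpa using hG.2.1
  | @insert a s ha ih =>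
    rw [Finset.set_biInter_insert]
    exact hG.2.2.2.1 _ (hf a (Finset.mem_insert_self a s)) _
      (ih fun i hi => hf i (Finset.mem_insert_of_mem hi))

/-- Every closed filter extends to a closed ultrafilter. -/
theorem exists_cuf {G : Set (Set X)} (hG : IsCF G) : ∃ M, G ⊆ M ∧ IsCUF M := by
  obtain ⟨M, hGM, hMmax⟩ := zorn_subset_nonempty {H : Set (Set X) | IsCF H}
    (fun c hc hchain hne => by
      refine ⟨⋃₀ c, ⟨?_, ?_, ?_, ?_, ?_⟩, fun s hs => subset_sUnion_of_mem hs⟩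
      · rintro A ⟨H, hH, hA⟩
        exact (hc hH).1 A hA
      · obtain ⟨H, hH⟩ := hne
        exact ⟨H, hH, (hc hH).2.1⟩
      · rintro ⟨H, hH, hA⟩
        exact (hc hH).2.2.1 hA
      · rintro A ⟨H1, hH1, hA⟩ B ⟨H2, hH2, hB⟩
        rcases hchain.total hH1 hH2 with hle | hle
        · exact ⟨H2, hH2, (hc hH2).2.2.2.1 A (hle hA) B hB⟩
        · exact ⟨H1, hH1, (hc hH1).2.2.2.1 A hA B (hle hB)⟩
      · rintro A ⟨H, hH, hA⟩ B hBc hAB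
        exact ⟨H, hH, (hc hH).2.2.2.2 A hA B hBc hAB⟩) G hG
  refine ⟨M, hGM, hMmax.1, fun B hB hmeet => ?_⟩
  set M' : Set (Set X) := {C | IsClosed C ∧ ∃ A ∈ M, A ∩ B ⊆ C} with hM'def
  have hMM' : M ⊆ M' := fun A hA => ⟨hMmax.1.1 A hA, A, hA, Set.inter_subset_left⟩
  have hM'cf : IsCF M' := by
    refine ⟨fun C hC => hC.1, hMM' hMmax.1.2.1, ?_, ?_, ?_⟩
    · rintro ⟨-, A, hA, hsub⟩
      exact (hmeet A hA).ne_empty (Set.subset_empty_iff.mp hsub)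
    · rintro C1 ⟨hC1, A1, hA1, h1⟩ C2 ⟨hC2, A2, hA2, h2⟩
      exact ⟨hC1.inter hC2, A1 ∩ A2, hMmax.1.2.2.2.1 A1 hA1 A2 hA2,
        fun x hx => ⟨h1 ⟨hx.1.1, hx.2⟩, h2 ⟨hx.1.2, hx.2⟩⟩⟩
    · rintro C ⟨hC, A, hA, hsub⟩ D hDc hCD
      exact ⟨hDc, A, hA, hsub.trans hCD⟩
  have : M' ⊆ M := hMmax.2 hM'cf hMM'
  exact this ⟨hB, Set.univ, hMmax.1.2.1, fun x hx => hx.2⟩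

/-- The underlying set of the Wallman-type extension. -/
def WP (κ : Cardinal.{u}) (X : Type u) [TopologicalSpace X] : Type u :=
  {G : Set (Set X) // IsCUF G ∧ ∃ A ∈ G, A ∈ FamilyKappa κ X}

variable (κ : Cardinal.{u})

/-- Basic open set of the Wallman extension. -/
def star (U : Set X) : Set (WP κ X) := {y | ∃ A ∈ y.1, A ⊆ U}

/-- Basic closed set of the Wallman extension. -/
def fstar (F : Set X) : Set (WP κ X) := {y | F ∈ y.1}

instance : TopologicalSpace (WP κ X) :=
  TopologicalSpace.generateFrom {s | ∃ U : Set X, IsOpen U ∧ s = star κ U}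

theorem isOpen_star {U : Set X} (hU : IsOpen U) : IsOpen (star κ U) :=
  TopologicalSpace.GenerateOpen.basic _ ⟨U, hU, rfl⟩

theorem star_inter (U V : Set X) : star κ U ∩ star κ V = star κ (U ∩ V) := by
  ext y
  constructor
  · rintro ⟨⟨A, hA, hAU⟩, B, hB, hBV⟩
    exact ⟨A ∩ B, y.2.1.1.2.2.2.1 A hA B hB, fun x hx => ⟨hAU hx.1, hBV hx.2⟩⟩
  · rintro ⟨A, hA, hAUV⟩
    exact ⟨⟨A, hA, fun x hx => (hAUV hx).1⟩, ⟨A, hA, fun x hx => (hAUV hx).2⟩⟩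

theorem mem_star_univ (y : WP κ X) : y ∈ star κ (Set.univ : Set X) :=
  ⟨Set.univ, y.2.1.1.2.1, le_refl _⟩

theorem basis : TopologicalSpace.IsTopologicalBasis
    {s : Set (WP κ X) | ∃ U : Set X, IsOpen U ∧ s = star κ U} := by
  refine ⟨?_, ?_, rfl⟩
  · rintro t1 ⟨U, hU, rfl⟩ t2 ⟨V, hV, rfl⟩ y hy
    exact ⟨star κ (U ∩ V), ⟨U ∩ V, hU.inter hV, rfl⟩, (star_inter κ U V) ▸ hy,
      (star_inter κ U V) ▸ le_refl _⟩
  · refine Set.eq_univ_of_forall fun y => ?_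
    exact ⟨star κ Set.univ, ⟨Set.univ, isOpen_univ, rfl⟩, mem_star_univ κ y⟩

theorem compl_fstar {F : Set X} (hF : IsClosed F) : (fstar κ F)ᶜ = star κ Fᶜ := by
  ext y
  constructor
  · intro hy
    obtain ⟨A, hA, hAF⟩ := y.2.1.exists_disjoint_of_notMem hF hy
    exact ⟨A, hA, fun x hx hxF => Set.eq_empty_iff_forall_notMem.mp hAF x ⟨hx, hxF⟩⟩
  · rintro ⟨A, hA, hAF⟩ hy
    have h0 : A ∩ F ∈ y.1 := y.2.1.1.2.2.2.1 A hA F hy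
    have : A ∩ F = ∅ := Set.eq_empty_iff_forall_notMem.mpr fun x hx => hAF hx.1 hx.2
    exact y.2.1.1.2.2.1 (this ▸ h0)

theorem isClosed_fstar {F : Set X} (hF : IsClosed F) : IsClosed (fstar κ F) := by
  rw [← isOpen_compl_iff, compl_fstar κ hF]
  exact isOpen_star κ hF.isOpen_compl

theorem star_subset_fstar (U : Set X) : star κ U ⊆ fstar κ (closure U) := by
  rintro y ⟨A, hA, hAU⟩
  exact y.2.1.1.2.2.2.2 A hA (closure U) isClosed_closure (hAU.trans subset_closure)

theorem fstar_disjoint {F F' : Set X} (hFF' : F ∩ F' = ∅) :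
    fstar κ F ∩ fstar κ F' = ∅ := by
  refine Set.eq_empty_iff_forall_notMem.mpr fun y hy => ?_
  exact y.2.1.1.2.2.1 (hFF' ▸ y.2.1.1.2.2.2.1 F hy.1 F' hy.2)

/-- If an ultrafilter contains `F ⊆ ⋃ finite opens`, it has a member inside one of them. -/
theorem mem_star_of_subset_finite_union {y : WP κ X} {F : Set X} (hFy : F ∈ y.1)
    (t : Finset (Set X)) (hop : ∀ V ∈ t, IsOpen V) (hcov : F ⊆ ⋃ V ∈ t, V) :
    ∃ V ∈ t, y ∈ star κ V := by
  by_contra hc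
  push_neg at hc
  have hcompl : ∀ V ∈ t, Vᶜ ∈ y.1 := by
    intro V hV
    refine y.2.1.2 Vᶜ (hop V hV).isClosed_compl fun A hA => ?_
    · by_contra hne
      rw [Set.not_nonempty_iff_eq_empty] at hne
      exact hc V hV ⟨A, hA, fun x hx => by
        by_contra hxV
        exact Set.eq_empty_iff_forall_notMem.mp hne x ⟨hx, hxV⟩⟩
  have hmem : (F ∩ ⋂ V ∈ t, Vᶜ) ∈ y.1 :=
    y.2.1.1.2.2.2.1 F hFy _ (y.2.1.1.biInter_mem t _ hcompl)
  have hempty : F ∩ ⋂ V ∈ t, Vᶜ = ∅ := by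
    refine Set.eq_empty_iff_forall_notMem.mpr fun x hx => ?_
    obtain ⟨V, hV, hxV⟩ := Set.mem_iUnion₂.mp (hcov hx.1)
    exact (Set.mem_iInter₂.mp hx.2 V hV) hxV
  exact y.2.1.1.2.2.1 (hempty ▸ hmem)

theorem isCompact_fstar {F : Set X} (hF : F ∈ FamilyKappa κ X) :
    IsCompact (fstar κ F) := by
  classical
  refine isCompact_of_finite_subcover fun {ι} U hUo hcov => ?_
  -- the collection of open sets of `X` whose star is inside some `U i`
  set P : Set (Set X) := {V | IsOpen V ∧ ∃ i, star κ V ⊆ U i} with hP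
  -- Step 1: there is a finite subfamily of `P` covering `F`
  have hstep : ∃ t : Finset (Set X), ↑t ⊆ P ∧ F ⊆ ⋃ V ∈ t, V := by
    by_contra hc
    push_neg at hc
    set G : Set (Set X) := {B | IsClosed B ∧
      ∃ t : Finset (Set X), ↑t ⊆ P ∧ F ∩ ⋂ V ∈ t, Vᶜ ⊆ B} with hG
    have hGcf : IsCF G := by
      refine ⟨fun B hB => hB.1, ⟨isClosed_univ, ∅, by simp⟩, ?_, ?_, ?_⟩
      · rintro ⟨-, t, htP, hsub⟩
        rw [Set.subset_empty_iff] at hsub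
        refine hc t htP fun x hx => ?_
        by_contra hxU
        refine Set.eq_empty_iff_forall_notMem.mp hsub x ⟨hx, Set.mem_iInter₂.mpr ?_⟩
        intro V hV hxV
        exact hxU (Set.mem_iUnion₂.mpr ⟨V, hV, hxV⟩)
      · rintro B1 ⟨hB1, t1, ht1, h1⟩ B2 ⟨hB2, t2, ht2, h2⟩
        refine ⟨hB1.inter hB2, t1 ∪ t2, ?_, ?_⟩
        · intro V hV
          rcases Finset.mem_union.mp hV with hV | hV
          exacts [ht1 hV, ht2 hV]
        · intro x hx
          have hx1 : x ∈ F ∩ ⋂ V ∈ t1, Vᶜ :=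
            ⟨hx.1, Set.mem_iInter₂.mpr fun V hV => Set.mem_iInter₂.mp hx.2 V
              (Finset.mem_union_left _ hV)⟩
          have hx2 : x ∈ F ∩ ⋂ V ∈ t2, Vᶜ :=
            ⟨hx.1, Set.mem_iInter₂.mpr fun V hV => Set.mem_iInter₂.mp hx.2 V
              (Finset.mem_union_right _ hV)⟩
          exact ⟨h1 hx1, h2 hx2⟩
      · rintro B ⟨hB, t, htP, hsub⟩ B' hB' hBB'
        exact ⟨hB', t, htP, hsub.trans hBB'⟩
    obtain ⟨M, hGM, hMuf⟩ := exists_cuf hGcf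
    have hFM : F ∈ M := hGM ⟨hF.1, ∅, by simp, by simp⟩
    set y : WP κ X := ⟨M, hMuf, F, hFM, hF⟩ with hy
    have hyF : y ∈ fstar κ F := hFM
    obtain ⟨i, hyi⟩ := Set.mem_iUnion.mp (hcov hyF)
    obtain ⟨s, ⟨V, hVo, rfl⟩, hys, hsU⟩ :=
      (basis κ).exists_subset_of_mem_open hyi (hUo i)
    have hVP : V ∈ P := ⟨hVo, i, hsU⟩
    have hVcM : Vᶜ ∈ M := hGM ⟨hVo.isClosed_compl, {V}, by simpa using hVP, by simp⟩
    obtain ⟨A, hA, hAV⟩ := hys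
    have hmem : A ∩ Vᶜ ∈ M := hMuf.1.2.2.2.1 A hA Vᶜ hVcM
    have he : A ∩ Vᶜ = ∅ := Set.eq_empty_iff_forall_notMem.mpr fun x hx => hx.2 (hAV hx.1)
    exact hMuf.1.2.2.1 (he ▸ hmem)
  obtain ⟨t, htP, hcovF⟩ := hstep
  -- Step 2: choose indices
  have hchoice : ∀ V ∈ t, ∃ i, star κ V ⊆ U i := fun V hV => (htP hV).2
  choose g hg using hchoice
  refine ⟨t.attach.image fun V => g V.1 V.2, fun y hy => ?_⟩
  obtain ⟨V, hV, hyV⟩ := mem_star_of_subset_finite_union κ hy t (fun V hV => (htP hV).1) hcovF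
  refine Set.mem_iUnion₂.mpr ⟨g V hV, ?_, hg V hV hyV⟩
  exact Finset.mem_image.mpr ⟨⟨V, hV⟩, Finset.mem_attach _ _, rfl⟩

section Pt

variable [T1Space X]

/-- The canonical point of the Wallman extension associated to `x`. -/
def pt (hκ : ℵ₀ ≤ κ) (x : X) : WP κ X :=
  ⟨{A : Set X | IsClosed A ∧ x ∈ A},
    ⟨⟨fun A hA => hA.1, ⟨isClosed_univ, trivial⟩, fun hc => hc.2,
      fun A hA B hB => ⟨hA.1.inter hB.1, hA.2, hB.2⟩,
      fun A hA B hBc hAB => ⟨hBc, hAB hA.2⟩⟩,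
      fun B hB hmeet => ⟨hB, by
        obtain ⟨w, hw1, hw2⟩ := hmeet {x} ⟨isClosed_singleton, rfl⟩
        rwa [Set.eq_of_mem_singleton hw1] at hw2⟩⟩,
    {x}, ⟨isClosed_singleton, rfl⟩,
    isClosed_singleton, {x}, le_trans (by simp) hκ, subset_closure⟩

theorem pt_preimage_star (hκ : ℵ₀ ≤ κ) {U : Set X} (hU : IsOpen U) :
    pt κ hκ ⁻¹' star κ U = U := by
  ext x
  constructor
  · rintro ⟨A, ⟨hAc, hxA⟩, hAU⟩
    exact hAU hxA
  · intro hx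
    exact ⟨{x}, ⟨isClosed_singleton, rfl⟩, Set.singleton_subset_iff.mpr hx⟩

theorem pt_injective (hκ : ℵ₀ ≤ κ) : Function.Injective (pt (X := X) κ hκ) := by
  intro x x' hxx'
  have h1 : ({x} : Set X) ∈ (pt κ hκ x).1 := ⟨isClosed_singleton, rfl⟩
  rw [hxx'] at h1
  exact (Set.eq_of_mem_singleton h1.2).symm

theorem isEmbedding_pt (hκ : ℵ₀ ≤ κ) : Topology.IsEmbedding (pt (X := X) κ hκ) := by
  refine ⟨⟨?_⟩, pt_injective κ hκ⟩
  have himage : Set.preimage (pt κ hκ) ''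
      {s : Set (WP κ X) | ∃ U : Set X, IsOpen U ∧ s = star κ U} = {U : Set X | IsOpen U} := by
    ext W
    constructor
    · rintro ⟨s, ⟨U, hU, rfl⟩, rfl⟩
      rw [pt_preimage_star κ hκ hU]
      exact hU
    · intro hW
      exact ⟨star κ W, ⟨W, hW, rfl⟩, pt_preimage_star κ hκ hW⟩
  calc (‹TopologicalSpace X› : TopologicalSpace X)
      = TopologicalSpace.generateFrom {U : Set X | IsOpen U} :=
        (TopologicalSpace.generateFrom_setOf_isOpen _).symm
    _ = TopologicalSpace.generateFrom (Set.preimage (pt κ hκ) ''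
        {s : Set (WP κ X) | ∃ U : Set X, IsOpen U ∧ s = star κ U}) := by rw [himage]
    _ = TopologicalSpace.induced (pt κ hκ) (TopologicalSpace.generateFrom
        {s : Set (WP κ X) | ∃ U : Set X, IsOpen U ∧ s = star κ U}) :=
        induced_generateFrom_eq.symm

end Pt

end WallmanAux

open WallmanAux in
/-- Every strongly `κ̄`-normal `T₁`-space embeds into a Urysohn `κ`-bounded space. -/
theorem embeds_into_urysohn_kappaBounded_of_stronglyFNormal {X : Type u} [TopologicalSpace X]
    [T1Space X] (κ : Cardinal.{u}) (hκ : ℵ₀ ≤ κ)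
    (h : StronglyFNormal X (FamilyKappa κ X)) :
    ∃ (Y : Type u) (_ : TopologicalSpace Y), UrysohnSpace Y ∧ KappaBounded κ Y ∧
      ∃ f : X → Y, Topology.IsEmbedding f := by
  classical
  refine ⟨WP κ X, inferInstance, ?_, ?_, ?_⟩
  · -- Urysohn
    intro y z hyz
    have hne : y.1 ≠ z.1 := fun he => hyz (Subtype.ext he)
    -- find disjoint members
    have key : ∃ A B : Set X, A ∈ y.1 ∧ B ∈ z.1 ∧ A ∩ B = ∅ := by
      have : ¬ ∀ A : Set X, A ∈ y.1 ↔ A ∈ z.1 := fun hall => hne (Set.ext hall)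
      push_neg at this
      obtain ⟨A, hA⟩ := this
      rcases hA with ⟨hAy, hAz⟩ | ⟨hAy, hAz⟩
      · obtain ⟨B, hB, hBA⟩ := z.2.1.exists_disjoint_of_notMem (y.2.1.1.1 A hAy) hAz
        exact ⟨A, B, hAy, hB, by rw [Set.inter_comm] at hBA; exact hBA⟩
      · obtain ⟨B, hB, hBA⟩ := y.2.1.exists_disjoint_of_notMem (z.2.1.1.1 A hAz) hAy
        exact ⟨B, A, hB, hAz, hBA⟩
    obtain ⟨A, B, hAy, hBz, hAB⟩ := key
    obtain ⟨Ay, hAyy, hAyF⟩ := y.2.2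
    obtain ⟨Bz, hBzz, hBzF⟩ := z.2.2
    set A' := A ∩ Ay with hA'
    set B' := B ∩ Bz with hB'
    have hA'y : A' ∈ y.1 := y.2.1.1.2.2.2.1 A hAy Ay hAyy
    have hB'z : B' ∈ z.1 := z.2.1.1.2.2.2.1 B hBz Bz hBzz
    have hA'F : A' ∈ FamilyKappa κ X := by
      obtain ⟨hc, C, hC, hsub⟩ := hAyF
      exact ⟨(y.2.1.1.1 A hAy).inter hc, C, hC, fun x hx => hsub hx.2⟩
    have hB'F : B' ∈ FamilyKappa κ X := by
      obtain ⟨hc, C, hC, hsub⟩ := hBzF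
      exact ⟨(z.2.1.1.1 B hBz).inter hc, C, hC, fun x hx => hsub hx.2⟩
    have hdisj : Disjoint A' B' := by
      rw [Set.disjoint_iff_inter_eq_empty]
      refine Set.eq_empty_iff_forall_notMem.mpr fun x hx => ?_
      exact Set.eq_empty_iff_forall_notMem.mp hAB x ⟨hx.1.1, hx.2.1⟩
    obtain ⟨U, V, hUo, hVo, hAU, hBV, hUV⟩ := h A' hA'F B' hB'F hdisj
    refine ⟨star κ U, star κ V, isOpen_star κ hUo, isOpen_star κ hVo,
      ⟨A', hA'y, hAU⟩, ⟨B', hB'z, hBV⟩, ?_⟩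
    have h1 : closure (star κ U) ⊆ fstar κ (closure U) :=
      closure_minimal (star_subset_fstar κ U) (isClosed_fstar κ isClosed_closure)
    have h2 : closure (star κ V) ⊆ fstar κ (closure V) :=
      closure_minimal (star_subset_fstar κ V) (isClosed_fstar κ isClosed_closure)
    refine Set.eq_empty_iff_forall_notMem.mpr fun w hw => ?_
    exact Set.eq_empty_iff_forall_notMem.mp (fstar_disjoint κ hUV) w ⟨h1 hw.1, h2 hw.2⟩
  · -- κ-bounded
    intro S hS
    rcases Set.eq_empty_or_nonempty S with rfl | hSne
    · simpa using isCompact_empty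
    have hmem : ∀ y : S, ∃ A ∈ (y : WP κ X).1, A ∈ FamilyKappa κ X := fun y => y.1.2.2
    choose A hA hAF using hmem
    choose C hCκ hAC using fun y : S => (hAF y).2
    set D : Set X := ⋃ y : S, C y with hD
    have hDκ : #D ≤ κ := by
      refine le_trans (Cardinal.mk_iUnion_le _) ?_
      have h1 : #S * ⨆ y : S, #(C y) ≤ κ * κ :=
        mul_le_mul' hS (ciSup_le' fun y => hCκ y)
      rwa [Cardinal.mul_eq_self hκ] at h1
    have hDF : closure D ∈ FamilyKappa κ X := ⟨isClosed_closure, D, hDκ, le_refl _⟩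
    have hSsub : S ⊆ fstar κ (closure D) := by
      rintro y hy
      have : A ⟨y, hy⟩ ⊆ closure D := by
        refine (hAC ⟨y, hy⟩).trans (closure_mono ?_)
        exact Set.subset_iUnion (fun y : S => C y) ⟨y, hy⟩
      exact y.2.1.1.2.2.2.2 _ (hA ⟨y, hy⟩) _ isClosed_closure this
    have hclosed : IsClosed (fstar κ (closure D)) := isClosed_fstar κ isClosed_closure
    exact (isCompact_fstar κ hDF).of_isClosed_subset isClosed_closure
      (closure_minimal hSsub hclosed)
  · exact ⟨pt κ hκ, isEmbedding_pt κ hκ⟩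
end

section
/- Let κ be an infinite cardinal and let X be a T1 topological space that is totally κ̄-normal. Then X is homeomorphic to a subspace of a regular κ-bounded topological space; that is, there exists a regular κ-bounded topological space Y and a topological embedding of X into Y. -/
universe u

open Cardinal Set Topology

section CUF

variable {X : Type u} [TopologicalSpace X]

/-- A closed ultrafilter on `X`. -/
structure CUF (s : Set (Set X)) : Prop where
  closed : ∀ F ∈ s, IsClosed F
  univ_mem : Set.univ ∈ s
  empty_not_mem : (∅ : Set X) ∉ s
  inter_mem : ∀ F ∈ s, ∀ G ∈ s, F ∩ G ∈ s
  max : ∀ F : Set X, IsClosed F → (∀ G ∈ s, (F ∩ G).Nonempty) → F ∈ s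

lemma CUF.nonempty {s : Set (Set X)} (hs : CUF s) {F : Set X} (hF : F ∈ s) : F.Nonempty := by
  rcases F.eq_empty_or_nonempty with rfl | h
  · exact absurd hF hs.empty_not_mem
  · exact h

lemma CUF.mono {s : Set (Set X)} (hs : CUF s) {F G : Set X} (hG : G ∈ s)
    (hFc : IsClosed F) (hGF : G ⊆ F) : F ∈ s :=
  hs.max F hFc fun G' hG' =>
    (hs.nonempty (hs.inter_mem G hG G' hG')).mono (inter_subset_inter_left _ hGF)

lemma CUF.exists_disjoint {s : Set (Set X)} (hs : CUF s) {F : Set X}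
    (hFc : IsClosed F) (hF : F ∉ s) : ∃ G ∈ s, F ∩ G = ∅ := by
  by_contra hc
  push_neg at hc
  exact hF (hs.max F hFc hc)

/-- Zorn: a family of closed sets with the finite intersection property extends to a
closed ultrafilter. -/
lemma exists_cuf {ι : Type u} (f : ι → Set X) (hcl : ∀ i, IsClosed (f i))
    (hfip : ∀ T : Finset ι, (⋂ i ∈ T, f i).Nonempty) :
    ∃ s : Set (Set X), CUF s ∧ ∀ i, f i ∈ s := by
  classical
  set S : Set (Set (Set X)) := {s | (∀ F ∈ s, IsClosed F) ∧ Set.univ ∈ s ∧ (∅ : Set X) ∉ s ∧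
    (∀ F ∈ s, ∀ G ∈ s, F ∩ G ∈ s) ∧ ∀ i, f i ∈ s} with hS
  have hs₀ : {F : Set X | IsClosed F ∧ ∃ T : Finset ι, (⋂ i ∈ T, f i) ⊆ F} ∈ S := by
    refine ⟨fun F hF => hF.1, ⟨isClosed_univ, ∅, by simp⟩, ?_, ?_, ?_⟩
    · rintro ⟨-, T, hT⟩
      exact absurd (subset_empty_iff.1 hT) (nonempty_iff_ne_empty.1 (hfip T))
    · rintro F ⟨hFc, T₁, hT₁⟩ G ⟨hGc, T₂, hT₂⟩
      refine ⟨hFc.inter hGc, T₁ ∪ T₂, subset_inter (subset_trans ?_ hT₁) (subset_trans ?_ hT₂)⟩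
      · intro x hx
        simp only [mem_iInter] at hx ⊢
        exact fun i hi => hx i (Finset.mem_union_left _ hi)
      · intro x hx
        simp only [mem_iInter] at hx ⊢
        exact fun i hi => hx i (Finset.mem_union_right _ hi)
    · intro i
      exact ⟨hcl i, {i}, by simp⟩
  have hub : ∀ c ⊆ S, IsChain (· ⊆ ·) c → c.Nonempty → ∃ ub ∈ S, ∀ s ∈ c, s ⊆ ub := by
    intro c hcS hchain hcne
    obtain ⟨s₁, hs₁⟩ := hcne
    refine ⟨⋃₀ c, ⟨?_, ?_, ?_, ?_, ?_⟩, fun s hs => subset_sUnion_of_mem hs⟩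
    · rintro F ⟨s, hs, hFs⟩
      exact (hcS hs).1 F hFs
    · exact ⟨s₁, hs₁, (hcS hs₁).2.1⟩
    · rintro ⟨s, hs, h0⟩
      exact (hcS hs).2.2.1 h0
    · rintro F ⟨s, hs, hFs⟩ G ⟨t, ht, hGt⟩
      rcases hchain.total hs ht with hst | hts
      · exact ⟨t, ht, (hcS ht).2.2.2.1 F (hst hFs) G hGt⟩
      · exact ⟨s, hs, (hcS hs).2.2.2.1 F hFs G (hts hGt)⟩
    · intro i
      exact ⟨s₁, hs₁, (hcS hs₁).2.2.2.2 i⟩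
  obtain ⟨m, -, hmS, hmax⟩ := zorn_subset_nonempty S hub _ hs₀
  obtain ⟨hmcl, hmuniv, hmempty, hminter, hmf⟩ := hmS
  refine ⟨m, ⟨hmcl, hmuniv, hmempty, hminter, ?_⟩, hmf⟩
  intro F hFc hmeet
  set m' : Set (Set X) := {H | IsClosed H ∧ ∃ G ∈ m, F ∩ G ⊆ H} with hm'
  have hmm' : m ⊆ m' := fun G hG => ⟨hmcl G hG, G, hG, inter_subset_right⟩
  have hm'S : m' ∈ S := by
    refine ⟨fun H hH => hH.1, hmm' hmuniv, ?_, ?_, fun i => hmm' (hmf i)⟩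
    · rintro ⟨-, G, hG, hsub⟩
      exact absurd (subset_empty_iff.1 hsub) (nonempty_iff_ne_empty.1 (hmeet G hG))
    · rintro H₁ ⟨h1c, G₁, hG₁, hs₁⟩ H₂ ⟨h2c, G₂, hG₂, hs₂⟩
      exact ⟨h1c.inter h2c, G₁ ∩ G₂, hminter _ hG₁ _ hG₂,
        subset_inter (subset_trans (by intro x ⟨hx, h1, _⟩; exact ⟨hx, h1⟩) hs₁)
          (subset_trans (by intro x ⟨hx, _, h2⟩; exact ⟨hx, h2⟩) hs₂)⟩
  have hsub' : m' ⊆ m := hmax hm'S hmm'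
  have hFm' : F ∈ m' := ⟨hFc, Set.univ, hmuniv, fun x hx => hx.1⟩
  exact hsub' hFm'

/-- In a closed ultrafilter, if a member is covered by finitely many open sets, one of
them contains a member. -/
lemma CUF.finset_union {s : Set (Set X)} (hs : CUF s) {α : Type*} (T : Finset α)
    (W : α → Set X) (hW : ∀ a, IsOpen (W a)) :
    ∀ F ∈ s, F ⊆ ⋃ a ∈ T, W a → ∃ a ∈ T, ∃ G ∈ s, G ⊆ W a := by
  classical
  induction T using Finset.induction_on with
  | empty =>
    intro F hF hsub
    simp only [Finset.notMem_empty, iUnion_of_empty, iUnion_empty] at hsub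
    exact absurd (subset_empty_iff.1 hsub) (nonempty_iff_ne_empty.1 (hs.nonempty hF))
  | @insert a T ha ih =>
    intro F hF hsub
    by_cases hmem : F ∩ (W a)ᶜ ∈ s
    · have hcov : F ∩ (W a)ᶜ ⊆ ⋃ b ∈ T, W b := by
        intro x ⟨hxF, hxW⟩
        have := hsub hxF
        simp only [Finset.mem_insert, mem_iUnion, exists_prop] at this ⊢
        obtain ⟨b, hb | hb, hxb⟩ := this
        · exact absurd hxb (by rw [hb]; exact hxW)
        · exact ⟨b, hb, hxb⟩
      obtain ⟨b, hb, G, hG, hGW⟩ := ih _ hmem hcov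
      exact ⟨b, Finset.mem_insert_of_mem hb, G, hG, hGW⟩
    · obtain ⟨G, hG, hdis⟩ := hs.exists_disjoint
        ((hs.closed F hF).inter (hW a).isClosed_compl) hmem
      refine ⟨a, Finset.mem_insert_self a T, F ∩ G, hs.inter_mem F hF G hG, ?_⟩
      intro x ⟨hxF, hxG⟩
      by_contra hxW
      exact absurd (show x ∈ (F ∩ (W a)ᶜ) ∩ G from ⟨⟨hxF, hxW⟩, hxG⟩) (by rw [hdis]; simp)

end CUF

section YY

variable (κ : Cardinal.{u}) (X : Type u) [TopologicalSpace X]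

/-- The extension: closed ultrafilters containing a member of `FamilyKappa κ X`. -/
def YY : Type u := {s : Set (Set X) // CUF s ∧ ∃ A ∈ s, A ∈ FamilyKappa κ X}

/-- Basic open set of `YY`. -/
def Box (U : Set X) : Set (YY κ X) := {q | ∃ F ∈ q.1, F ⊆ U}

instance : TopologicalSpace (YY κ X) :=
  TopologicalSpace.generateFrom {V | ∃ U : Set X, IsOpen U ∧ V = Box κ X U}

lemma isBasis_box :
    TopologicalSpace.IsTopologicalBasis {V | ∃ U : Set X, IsOpen U ∧ V = Box κ X U} := by
  refine ⟨?_, ?_, rfl⟩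
  · rintro t₁ ⟨U₁, hU₁, rfl⟩ t₂ ⟨U₂, hU₂, rfl⟩ q ⟨⟨F₁, hF₁, hs₁⟩, ⟨F₂, hF₂, hs₂⟩⟩
    refine ⟨Box κ X (U₁ ∩ U₂), ⟨U₁ ∩ U₂, hU₁.inter hU₂, rfl⟩,
      ⟨F₁ ∩ F₂, q.2.1.inter_mem F₁ hF₁ F₂ hF₂, inter_subset_inter hs₁ hs₂⟩, ?_⟩
    rintro r ⟨F, hF, hsub⟩
    exact ⟨⟨F, hF, hsub.trans inter_subset_left⟩, ⟨F, hF, hsub.trans inter_subset_right⟩⟩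
  · refine sUnion_eq_univ_iff.2 fun q => ⟨Box κ X Set.univ, ⟨Set.univ, isOpen_univ, rfl⟩,
      Set.univ, q.2.1.univ_mem, subset_rfl⟩

lemma box_open {U : Set X} (hU : IsOpen U) : IsOpen (Box κ X U) :=
  (isBasis_box κ X).isOpen ⟨U, hU, rfl⟩

end YY

section Main

variable {X : Type u} [TopologicalSpace X] (κ : Cardinal.{u})

lemma closure_box_subset {V U : Set X} (hcl : closure V ⊆ U) :
    closure (Box κ X V) ⊆ Box κ X U := by
  intro r hr
  have hclV : closure V ∈ r.1 := by
    refine r.2.1.max _ isClosed_closure fun G hG => ?_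
    by_contra hne
    have hGsub : G ⊆ (closure V)ᶜ := fun x hx hxV => hne ⟨x, hxV, hx⟩
    have hopen : IsOpen (Box κ X (closure V)ᶜ) := box_open κ X isClosed_closure.isOpen_compl
    obtain ⟨r', ⟨F₁, hF₁, hF₁s⟩, F₂, hF₂, hF₂s⟩ :=
      mem_closure_iff.1 hr _ hopen ⟨G, hG, hGsub⟩
    obtain ⟨x, hx1, hx2⟩ := r'.2.1.nonempty (r'.2.1.inter_mem F₁ hF₁ F₂ hF₂)
    exact (hF₁s hx1) (subset_closure (hF₂s hx2))
  exact ⟨closure V, hclV, hcl⟩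

lemma regular_YY (h : TotallyFNormal X (FamilyKappa κ X)) : RegularSpace (YY κ X) := by
  refine RegularSpace.of_exists_mem_nhds_isClosed_subset fun q s hs => ?_
  obtain ⟨V, ⟨U, hU, rfl⟩, hqV, hVs⟩ := (isBasis_box κ X).mem_nhds_iff.1 hs
  obtain ⟨F, hF, hFU⟩ := hqV
  obtain ⟨A, hAq, hAfam⟩ := q.2.2
  have hA'q : A ∩ F ∈ q.1 := q.2.1.inter_mem A hAq F hF
  have hA'fam : A ∩ F ∈ FamilyKappa κ X := by
    obtain ⟨hAc, C, hC, hsub⟩ := hAfam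
    exact ⟨hAc.inter (q.2.1.closed F hF), C, hC, fun x hx => hsub hx.1⟩
  have hdisj : Disjoint (A ∩ F) Uᶜ := Set.disjoint_left.2 fun x hx hxc => hxc (hFU hx.2)
  obtain ⟨V', W', hV', hW', hAV, hUW, hVW⟩ := h _ hA'fam Uᶜ hU.isClosed_compl hdisj
  have hclsub : closure V' ⊆ U := by
    have h1 : closure V' ⊆ W'ᶜ :=
      closure_minimal (fun x hx => Set.disjoint_left.1 hVW hx) hW'.isClosed_compl
    intro x hx
    by_contra hxU
    exact h1 hx (hUW hxU)
  exact ⟨closure (Box κ X V'),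
    Filter.mem_of_superset ((box_open κ X hV').mem_nhds ⟨A ∩ F, hA'q, hAV⟩) subset_closure,
    isClosed_closure, subset_trans (closure_box_subset κ hclsub) hVs⟩

variable [T1Space X]

/-- The principal closed ultrafilter at a point. -/
def pt (x : X) : Set (Set X) := {F | IsClosed F ∧ x ∈ F}

lemma pt_cuf (x : X) : CUF (pt x) := by
  refine ⟨fun F hF => hF.1, ⟨isClosed_univ, mem_univ x⟩,
    fun h => absurd h.2 (Set.notMem_empty x),
    fun F hF G hG => ⟨hF.1.inter hG.1, hF.2, hG.2⟩,
    fun F hFc hmeet => ⟨hFc, ?_⟩⟩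
  obtain ⟨y, hyF, hy⟩ := hmeet {x} ⟨isClosed_singleton, rfl⟩
  rwa [hy] at hyF

lemma singleton_fam (hκ : ℵ₀ ≤ κ) (x : X) : {x} ∈ FamilyKappa κ X :=
  ⟨isClosed_singleton, {x}, by rw [Cardinal.mk_singleton]; exact le_trans one_le_aleph0 hκ,
    subset_closure⟩

/-- The embedding of `X` into `YY κ X`. -/
def emb (hκ : ℵ₀ ≤ κ) (x : X) : YY κ X :=
  ⟨pt x, pt_cuf x, {x}, ⟨isClosed_singleton, rfl⟩, singleton_fam κ hκ x⟩

lemma emb_preimage (hκ : ℵ₀ ≤ κ) (U : Set X) : emb κ hκ ⁻¹' Box κ X U = U := by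
  ext x
  constructor
  · rintro ⟨F, ⟨hFc, hxF⟩, hFU⟩
    exact hFU hxF
  · intro hx
    exact ⟨{x}, ⟨isClosed_singleton, rfl⟩, singleton_subset_iff.2 hx⟩

lemma emb_isEmbedding (hκ : ℵ₀ ≤ κ) : Topology.IsEmbedding (emb (X := X) κ hκ) := by
  constructor
  · constructor
    show ‹TopologicalSpace X› =
      TopologicalSpace.induced (emb κ hκ)
        (TopologicalSpace.generateFrom {V | ∃ U : Set X, IsOpen U ∧ V = Box κ X U})
    rw [induced_generateFrom_eq]
    have himg : Set.preimage (emb κ hκ) '' {V | ∃ U : Set X, IsOpen U ∧ V = Box κ X U} =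
        {U : Set X | IsOpen U} := by
      ext W
      constructor
      · rintro ⟨V, ⟨U, hU, rfl⟩, rfl⟩
        show IsOpen (emb κ hκ ⁻¹' Box κ X U)
        rw [emb_preimage]
        exact hU
      · intro hW
        exact ⟨Box κ X W, ⟨W, hW, rfl⟩, emb_preimage κ hκ W⟩
    rw [himg, TopologicalSpace.generateFrom_setOf_isOpen]
  · intro x y hxy
    have hx : {x} ∈ (emb κ hκ y).1 := by
      rw [← hxy]; exact ⟨isClosed_singleton, rfl⟩
    exact (hx.2 : y ∈ ({x} : Set X)).symm

lemma kappaBounded_YY (hκ : ℵ₀ ≤ κ) : KappaBounded κ (YY κ X) := by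
  classical
  intro S hS
  rcases S.eq_empty_or_nonempty with rfl | hSne
  · rw [closure_empty]
    exact isCompact_empty
  haveI : Nonempty ↥S := hSne.to_subtype
  have hsel : ∀ q : YY κ X, ∃ A C : Set X, A ∈ q.1 ∧ #C ≤ κ ∧ A ⊆ closure C := by
    intro q
    obtain ⟨A, hAq, hAc, C, hC, hsub⟩ := q.2.2
    exact ⟨A, C, hAq, hC, hsub⟩
  choose Af Cf hAmem hCcard hAsub using hsel
  set C₀ : Set X := ⋃ q ∈ S, Cf q with hC₀
  have hC₀card : #C₀ ≤ κ := by
    refine le_trans (mk_biUnion_le Cf S) ?_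
    calc #↥S * ⨆ q : ↥S, #(Cf q.1)
        ≤ κ * κ := mul_le_mul' hS (ciSup_le' fun q => hCcard q.1)
      _ = κ := mul_eq_self hκ
  have hF₀fam : closure C₀ ∈ FamilyKappa κ X := ⟨isClosed_closure, C₀, hC₀card, subset_rfl⟩
  set F₀ : Set X := closure C₀ with hF₀
  have hSK : ∀ q ∈ S, F₀ ∈ q.1 := fun q hq =>
    q.2.1.mono (hAmem q) isClosed_closure
      ((hAsub q).trans (closure_mono (subset_biUnion_of_mem hq)))
  set K : Set (YY κ X) := {q | F₀ ∈ q.1} with hK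
  have hKclosed : IsClosed K := by
    rw [← isOpen_compl_iff]
    have hKc : Kᶜ = Box κ X F₀ᶜ := by
      ext q
      constructor
      · intro hq
        obtain ⟨G, hG, hdis⟩ := q.2.1.exists_disjoint isClosed_closure hq
        refine ⟨G, hG, fun x hx hxF => ?_⟩
        have hmem : x ∈ F₀ ∩ G := ⟨hxF, hx⟩
        rw [hdis] at hmem
        exact hmem
      · rintro ⟨G, hG, hGsub⟩ hqK
        obtain ⟨x, hxF, hxG⟩ := q.2.1.nonempty (q.2.1.inter_mem F₀ hqK G hG)
        exact hGsub hxG hxF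
    rw [hKc]
    exact box_open κ X isClosed_closure.isOpen_compl
  have hKcompact : IsCompact K := by
    refine isCompact_of_finite_subcover fun {ι} O hO hcover => ?_
    have hsel2 : ∀ q : ↥K, ∃ (i : ι) (U : Set X), IsOpen U ∧ ↑q ∈ Box κ X U ∧
        Box κ X U ⊆ O i := by
      intro q
      obtain ⟨i, hi⟩ := mem_iUnion.1 (hcover q.2)
      obtain ⟨V, ⟨U, hU, rfl⟩, hqV, hVO⟩ :=
        (isBasis_box κ X).exists_subset_of_mem_open hi (hO i)
      exact ⟨i, U, hU, hqV, hVO⟩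
    choose idx W hWopen hqW hWO using hsel2
    have hT : ∃ T : Finset ↥K, F₀ ⊆ ⋃ q ∈ T, W q := by
      by_contra hns
      push_neg at hns
      have hfip : ∀ T : Finset ↥K, (⋂ q ∈ T, (F₀ ∩ (W q)ᶜ)).Nonempty := by
        intro T
        obtain ⟨x, hxF, hx⟩ := not_subset.1 (hns T)
        simp only [mem_iUnion, exists_prop, not_exists, not_and] at hx
        exact ⟨x, mem_iInter₂.2 fun q hq => ⟨hxF, hx q hq⟩⟩
      obtain ⟨s, hsCUF, hmem⟩ := exists_cuf (fun q : ↥K => F₀ ∩ (W q)ᶜ)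
        (fun q => isClosed_closure.inter (hWopen q).isClosed_compl) hfip
      obtain ⟨qS, hqS⟩ := hSne
      have hF₀s : F₀ ∈ s := hsCUF.mono (hmem ⟨qS, hSK qS hqS⟩) isClosed_closure
        inter_subset_left
      set mY : YY κ X := ⟨s, hsCUF, F₀, hF₀s, hF₀fam⟩ with hmY
      have hmK : mY ∈ K := hF₀s
      obtain ⟨G, hGs, hGW⟩ := hqW ⟨mY, hmK⟩
      obtain ⟨x, hxG, hxF, hxW⟩ :=
        hsCUF.nonempty (hsCUF.inter_mem G hGs _ (hmem ⟨mY, hmK⟩))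
      exact hxW (hGW hxG)
    obtain ⟨T, hT⟩ := hT
    refine ⟨T.image idx, fun r hrK => ?_⟩
    obtain ⟨q, hqT, G, hGr, hGW⟩ := (r.2.1 : CUF r.1).finset_union T W hWopen F₀ hrK hT
    exact mem_iUnion₂.2 ⟨idx q, Finset.mem_image_of_mem idx hqT, hWO q ⟨G, hGr, hGW⟩⟩
  exact hKcompact.of_isClosed_subset isClosed_closure
    (closure_minimal (fun q hq => hSK q hq) hKclosed)

end Main


/-- Every totally `κ̄`-normal `T₁`-space embeds into a regular `κ`-bounded space. -/
theorem embeds_into_regular_kappaBounded_of_totallyFNormal {X : Type u} [TopologicalSpace X]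
    [T1Space X] (κ : Cardinal.{u}) (hκ : ℵ₀ ≤ κ)
    (h : TotallyFNormal X (FamilyKappa κ X)) :
    ∃ (Y : Type u) (_ : TopologicalSpace Y), RegularSpace Y ∧ KappaBounded κ Y ∧
      ∃ f : X → Y, Topology.IsEmbedding f :=
  ⟨YY κ X, inferInstance, regular_YY κ h, kappaBounded_YY κ hκ, emb κ hκ,
    emb_isEmbedding κ hκ⟩
end
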